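/- arXiv:2304.12779 — 5 statements merged into one kernel-verified Lean document; each statement's English description precedes it below -/
import Mathlib

section
/- Let G be a finite simple graph and M a maximum matching of G. Then for every collection 𝒫 of vertex-disjoint paths in G, each of order at least 4, one has 2|M| ≥ (4/5)·Σ_{P∈𝒫}|V(P)|; in particular 2|M| ≥ (4/5)·opt(G). -/
open SimpleGraph

/-- Degree of a vertex in a subgraph, via `Set.ncard` of the neighbor set. -/
noncomputable def subDeg {V : Type*} {G : SimpleGraph V} (H : G.Subgraph) (v : V) : ℕ :=
  (H.neighborSet v).ncard

/-- A subgraph is a path: it is a single vertex, or it is connected with exactly two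
vertices of degree 1 and all other vertices of degree 2. -/
def IsPathSubgraph {V : Type*} {G : SimpleGraph V} (P : G.Subgraph) : Prop :=
  P.Connected ∧
  ((∃ v, P.verts = {v}) ∨
    (({v ∈ P.verts | subDeg P v = 1}).ncard = 2 ∧
      ∀ v ∈ P.verts, subDeg P v = 1 ∨ subDeg P v = 2))

/-- `x` is an endpoint of the path subgraph `P` (for paths of order at least 2). -/
def IsPathEndpoint {V : Type*} {G : SimpleGraph V} (P : G.Subgraph) (x : V) : Prop :=
  x ∈ P.verts ∧ subDeg P x = 1

/-- A matching of `G`: a finite set of edges of `G`, no two of which share an endpoint. -/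
def IsMatchingSet {V : Type*} (G : SimpleGraph V) (M : Finset (Sym2 V)) : Prop :=
  ↑M ⊆ G.edgeSet ∧ ∀ e ∈ M, ∀ f ∈ M, e ≠ f → ∀ v : V, v ∈ e → v ∉ f

/-- A maximum matching of `G`. -/
def IsMaxMatchingSet {V : Type*} (G : SimpleGraph V) (M : Finset (Sym2 V)) : Prop :=
  IsMatchingSet G M ∧ ∀ M' : Finset (Sym2 V), IsMatchingSet G M' → M'.card ≤ M.card

/-- There is a collection of vertex-disjoint path subgraphs of `G`, each of order at
least 4, whose total number of vertices `n` satisfies `p n`. -/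
def HasDisjointPathsCovering {V : Type*} (G : SimpleGraph V) (p : ℕ → Prop) : Prop :=
  ∃ Ps : Set G.Subgraph,
    (∀ P ∈ Ps, IsPathSubgraph P ∧ 4 ≤ P.verts.ncard) ∧
    (Ps.Pairwise fun P Q => Disjoint P.verts Q.verts) ∧
    p ((⋃ P ∈ Ps, P.verts).ncard)

/-- There is a collection of vertex-disjoint path subgraphs of `G`, each of order at
least 4, covering at least `N` vertices in total. -/
def HasDisjointPathCover {V : Type*} (G : SimpleGraph V) (N : ℕ) : Prop :=
  HasDisjointPathsCovering G fun n => N ≤ n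

/-- `opt G`: the maximum total number of vertices in a collection of vertex-disjoint
paths of `G`, each of order at least 4. -/
noncomputable def optValue {V : Type*} (G : SimpleGraph V) : ℕ :=
  sSup {n : ℕ |
    ∃ Ps : Set G.Subgraph,
      (∀ P ∈ Ps, IsPathSubgraph P ∧ 4 ≤ P.verts.ncard) ∧
      (Ps.Pairwise fun P Q => Disjoint P.verts Q.verts) ∧
      n = (⋃ P ∈ Ps, P.verts).ncard}

/-- Degree of a vertex in the spanning subgraph determined by an edge set `F`. -/
noncomputable def edgeDeg {W : Type*} (F : Set (Sym2 W)) (v : W) : ℕ :=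
  {e ∈ F | v ∈ e}.ncard

/-- An edge set `C` saturates a vertex set `B` if some edge of `C` has an endpoint in `B`. -/
def Saturates {W : Type*} (C : Set (Sym2 W)) (B : Set W) : Prop :=
  ∃ e ∈ C, ∃ v ∈ B, v ∈ e

/-!
A path on `n` vertices contains a matching with `⌊n/2⌋` edges (every other edge), and
`⌊n/2⌋ ≥ 2n/5` as soon as `n ≥ 4`. The union of these matchings over vertex-disjoint paths is a
matching of `G`, hence has at most `|M|` edges.

To see a path subgraph as a walk, join its two degree-one vertices by a path `p`. If some vertex
of the subgraph were not on `p`, connectivity gives an edge leaving `p`, and the vertex of `p` on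
that edge would have one neighbour more than its degree.
-/

section

variable {V : Type*} {G : SimpleGraph V}

lemma IsMatchingSet.mono {G' : SimpleGraph V} {M : Finset (Sym2 V)} (hM : IsMatchingSet G M)
    (h : G ≤ G') : IsMatchingSet G' M :=
  ⟨hM.1.trans (edgeSet_mono h), hM.2⟩

lemma IsMatchingSet.insert [DecidableEq V] {M : Finset (Sym2 V)} {e : Sym2 V}
    (hM : IsMatchingSet G M) (he : e ∈ G.edgeSet) (hdisj : ∀ f ∈ M, ∀ v ∈ e, v ∉ f) :
    IsMatchingSet G (insert e M) := by
  refine ⟨?_, ?_⟩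
  · rw [Finset.coe_insert]
    exact Set.insert_subset he hM.1
  · simp only [Finset.mem_insert]
    rintro f (rfl | hf) g (rfl | hg) hfg v hvf hvg
    · exact hfg rfl
    · exact hdisj g hg v hvf hvg
    · exact hdisj f hf v hvg hvf
    · exact hM.2 f hf g hg hfg v hvf hvg

namespace SimpleGraph.Walk

lemma exists_adj_mem_support {u v : V} (p : G.Walk u v) (huv : u ≠ v) :
    ∃ w ∈ p.support, G.Adj u w := by
  cases p with
  | nil => exact absurd rfl huv
  | cons h q => exact ⟨_, by simp, h⟩

lemma IsPath.exists_adj_adj_of_mem_support {u v c : V} {p : G.Walk u v} (hp : p.IsPath)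
    (hc : c ∈ p.support) (hcu : c ≠ u) (hcv : c ≠ v) :
    ∃ a ∈ p.support, ∃ b ∈ p.support, a ≠ b ∧ G.Adj c a ∧ G.Adj c b := by
  induction p with
  | nil => exact absurd (by simpa using hc) hcu
  | @cons u w v huw q ih =>
    rw [support_cons, List.mem_cons] at hc
    rcases hc with rfl | hc
    · exact absurd rfl hcu
    have hu : u ∉ q.support := ((cons_isPath_iff huw q).mp hp).2
    by_cases hcw : c = w
    · subst hcw
      obtain ⟨b, hb, hcb⟩ := q.exists_adj_mem_support hcv
      exact ⟨u, by simp, b, by simp [hb], fun h => hu (h ▸ hb), huw.symm, hcb⟩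
    · obtain ⟨a, ha, b, hb, hab, hca, hcb⟩ := ih hp.of_cons hc hcw hcv
      exact ⟨a, by simp [ha], b, by simp [hb], hab, hca, hcb⟩

lemma IsPath.mem_support_of_adj {u v a b : V} {p : G.Walk u v} (hp : p.IsPath) (huv : u ≠ v)
    (hu : (G.neighborSet u).encard = 1) (hv : (G.neighborSet v).encard = 1)
    (hdeg : ∀ c ∈ p.support, (G.neighborSet c).encard ≤ 2)
    (ha : a ∈ p.support) (hab : G.Adj a b) : b ∈ p.support := by
  have end_case : ∀ {x y : V} (q : G.Walk x y), x ≠ y → (G.neighborSet x).encard = 1 →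
      G.Adj x b → b ∈ q.support := by
    intro x y q hxy hx hxb
    obtain ⟨t, ht⟩ := Set.encard_eq_one.mp hx
    obtain ⟨w, hw, hxw⟩ := q.exists_adj_mem_support hxy
    have hbt : b = t := by simpa [ht] using (G.mem_neighborSet x b).mpr hxb
    have hwt : w = t := by simpa [ht] using (G.mem_neighborSet x w).mpr hxw
    exact (hbt.trans hwt.symm) ▸ hw
  by_contra hb
  by_cases hau : a = u
  · exact hb (end_case p huv hu (hau ▸ hab))
  by_cases hav : a = v
  · exact hb (by simpa using end_case p.reverse huv.symm hv (hav ▸ hab))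
  obtain ⟨x, hx, y, hy, hxy, hax, hay⟩ := hp.exists_adj_adj_of_mem_support ha hau hav
  have hsub : ({x, y, b} : Set V) ⊆ G.neighborSet a := by
    simp [Set.insert_subset_iff, hax, hay, hab]
  have hthree : ({x, y, b} : Set V).encard = 3 :=
    Set.encard_eq_three.mpr ⟨x, y, b, hxy, fun h => hb (h ▸ hx), fun h => hb (h ▸ hy), rfl⟩
  have := (Set.encard_le_encard hsub).trans (hdeg a ha)
  rw [hthree] at this
  norm_num at this

variable [DecidableEq V]

def alternateEdges : {u v : V} → G.Walk u v → Finset (Sym2 V)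
  | _, _, nil => ∅
  | u, _, cons (v := w) _ nil => {s(u, w)}
  | u, _, cons (v := w) _ (cons _ q) => insert s(u, w) q.alternateEdges

lemma mem_edges_of_mem_alternateEdges {u v : V} {p : G.Walk u v} {e : Sym2 V}
    (he : e ∈ p.alternateEdges) : e ∈ p.edges := by
  fun_induction alternateEdges with
  | case1 => simp at he
  | case2 => simpa using he
  | case3 u _ w _ _ _ q ih =>
    rcases Finset.mem_insert.mp he with rfl | he
    · simp
    · simp [ih he]

lemma IsPath.card_alternateEdges {u v : V} {p : G.Walk u v} (hp : p.IsPath) :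
    p.alternateEdges.card = p.support.length / 2 := by
  fun_induction alternateEdges with
  | case1 => simp
  | case2 => simp
  | case3 u _ w _ _ _ q ih =>
    have hu : u ∉ q.support := fun hu => ((cons_isPath_iff _ _).mp hp).2 (by simp [hu])
    have hnot : s(u, w) ∉ q.alternateEdges := fun h =>
      hu (q.fst_mem_support_of_mem_edges (mem_edges_of_mem_alternateEdges h))
    rw [Finset.card_insert_of_notMem hnot, ih hp.of_cons.of_cons]
    simp only [support_cons, List.length_cons]
    omega

lemma IsPath.isMatchingSet_alternateEdges {u v : V} {p : G.Walk u v} (hp : p.IsPath) :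
    IsMatchingSet G p.alternateEdges := by
  fun_induction alternateEdges with
  | case1 => exact ⟨by simp, by simp⟩
  | case2 u _ huw =>
    refine ⟨by simpa using huw, ?_⟩
    simp only [Finset.mem_singleton]
    rintro e rfl f rfl hef
    exact absurd rfl hef
  | case3 u _ w huw _ _ q ih =>
    have hu : u ∉ q.support := fun hu => ((cons_isPath_iff _ _).mp hp).2 (by simp [hu])
    have hw : w ∉ q.support := ((cons_isPath_iff _ _).mp hp.of_cons).2
    refine (ih hp.of_cons.of_cons).insert huw fun f hf v hve hvf => ?_
    have hv := mem_support_of_mem_edges (mem_edges_of_mem_alternateEdges hf) hvf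
    rcases Sym2.mem_iff.mp hve with rfl | rfl
    exacts [hu hv, hw hv]

end SimpleGraph.Walk

namespace SimpleGraph.Subgraph

lemma Connected.reachable_spanningCoe {P : G.Subgraph} (hP : P.Connected) {a b : V}
    (ha : a ∈ P.verts) (hb : b ∈ P.verts) : P.spanningCoe.Reachable a b :=
  (hP.preconnected ⟨a, ha⟩ ⟨b, hb⟩).map ⟨Subtype.val, fun h => h⟩

lemma mem_verts_of_mem_support_spanningCoe {P : G.Subgraph} {u v c : V}
    (p : P.spanningCoe.Walk u v) (hv : v ∈ P.verts) (hc : c ∈ p.support) : c ∈ P.verts := by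
  induction p with
  | nil => simpa [← List.mem_singleton.mp hc] using hv
  | cons h q ih =>
    rcases List.mem_cons.mp hc with rfl | hc
    exacts [P.edge_vert h, ih hv hc]

end SimpleGraph.Subgraph

lemma encard_neighborSet_spanningCoe_eq_subDeg {P : G.Subgraph} {v : V} (h : subDeg P v ≠ 0) :
    (P.spanningCoe.neighborSet v).encard = subDeg P v :=
  (Set.finite_of_ncard_ne_zero h).cast_ncard_eq.symm

lemma IsPathSubgraph.exists_isPath_support {P : G.Subgraph} (hP : IsPathSubgraph P) :
    ∃ (u v : V) (p : P.spanningCoe.Walk u v), p.IsPath ∧ ∀ x, x ∈ p.support ↔ x ∈ P.verts := by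
  obtain ⟨hconn, ⟨v, hv⟩ | ⟨hE, hdeg⟩⟩ := hP
  · exact ⟨v, v, .nil, by simp, by simp [hv]⟩
  obtain ⟨x, w, hxw, hxwE⟩ := Set.ncard_eq_two.mp hE
  have hx : x ∈ {v ∈ P.verts | subDeg P v = 1} := hxwE ▸ Set.mem_insert x {w}
  have hw : w ∈ {v ∈ P.verts | subDeg P v = 1} := hxwE ▸ Set.mem_insert_of_mem x rfl
  have hdeg1 : ∀ {y}, subDeg P y = 1 → (P.spanningCoe.neighborSet y).encard = 1 := fun h =>
    (encard_neighborSet_spanningCoe_eq_subDeg (by omega)).trans (by simp [h])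
  obtain ⟨p, hp⟩ := (hconn.reachable_spanningCoe hx.1 hw.1).exists_isPath
  refine ⟨x, w, p, hp, fun a =>
    ⟨Subgraph.mem_verts_of_mem_support_spanningCoe p hw.1, fun ha => ?_⟩⟩
  by_contra hna
  obtain ⟨q⟩ := hconn.reachable_spanningCoe hx.1 ha
  obtain ⟨d, -, hd, hd'⟩ := q.exists_boundary_dart {y | y ∈ p.support} p.start_mem_support hna
  refine hd' (hp.mem_support_of_adj hxw (hdeg1 hx.2) (hdeg1 hw.2) (fun c hc => ?_) hd d.adj)
  have hc' := Subgraph.mem_verts_of_mem_support_spanningCoe p hw.1 hc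
  rcases hdeg c hc' with h | h <;>
    rw [encard_neighborSet_spanningCoe_eq_subDeg (P := P) (v := c) (by omega), h] <;> norm_num

lemma IsPathSubgraph.exists_isMatchingSet [DecidableEq V] {P : G.Subgraph}
    (hP : IsPathSubgraph P) :
    ∃ M : Finset (Sym2 V), IsMatchingSet G M ∧ (∀ e ∈ M, ∀ v ∈ e, v ∈ P.verts) ∧
      M.card = P.verts.ncard / 2 := by
  obtain ⟨u, v, p, hp, hsupp⟩ := hP.exists_isPath_support
  refine ⟨p.alternateEdges, hp.isMatchingSet_alternateEdges.mono P.spanningCoe_le,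
    fun e he x hx => (hsupp x).mp (Walk.mem_support_of_mem_edges
      (Walk.mem_edges_of_mem_alternateEdges he) hx), ?_⟩
  have hverts : P.verts = ↑p.support.toFinset := by ext; simp [hsupp]
  rw [hp.card_alternateEdges, hverts, Set.ncard_coe_finset,
    List.toFinset_card_of_nodup hp.support_nodup]

lemma disjoint_of_forall_mem_of_disjoint {M N : Finset (Sym2 V)} {S T : Set V} (hST : Disjoint S T)
    (hM : ∀ e ∈ M, ∀ v ∈ e, v ∈ S) (hN : ∀ e ∈ N, ∀ v ∈ e, v ∈ T) : Disjoint M N :=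
  Finset.disjoint_left.mpr fun e heM heN =>
    hST.ne_of_mem (hM e heM _ e.out_fst_mem) (hN e heN _ e.out_fst_mem) rfl

lemma isMatchingSet_biUnion [DecidableEq V] {ι : Type*} {T : Finset ι} {f : ι → Finset (Sym2 V)}
    {S : ι → Set V} (hf : ∀ i ∈ T, IsMatchingSet G (f i))
    (hfS : ∀ i ∈ T, ∀ e ∈ f i, ∀ v ∈ e, v ∈ S i) (hS : (T : Set ι).PairwiseDisjoint S) :
    IsMatchingSet G (T.biUnion f) := by
  refine ⟨fun e he => ?_, fun e he g hg heg v hve hvg => ?_⟩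
  · obtain ⟨i, hi, hei⟩ := Finset.mem_biUnion.mp he
    exact (hf i hi).1 hei
  · obtain ⟨i, hi, hei⟩ := Finset.mem_biUnion.mp he
    obtain ⟨j, hj, hgj⟩ := Finset.mem_biUnion.mp hg
    by_cases hij : i = j
    · subst hij
      exact (hf i hi).2 e hei g hgj heg v hve hvg
    · exact (hS hi hj hij).ne_of_mem (hfS i hi e hei v hve) (hfS j hj g hgj v hvg) rfl

theorem four_mul_ncard_biUnion_le_of_isMaxMatchingSet [Finite V] {M : Finset (Sym2 V)}
    (hM : IsMaxMatchingSet G M) {Ps : Set G.Subgraph}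
    (hPs : ∀ P ∈ Ps, IsPathSubgraph P ∧ 4 ≤ P.verts.ncard)
    (hdisj : Ps.Pairwise fun P Q => Disjoint P.verts Q.verts) :
    4 * (⋃ P ∈ Ps, P.verts).ncard ≤ 5 * (2 * M.card) := by
  classical
  choose! f hfM hfV hfcard using fun P (hP : P ∈ Ps) => (hPs P hP).1.exists_isMatchingSet
  set T := Ps.toFinite.toFinset
  have hT : (T : Set G.Subgraph) = Ps := Ps.toFinite.coe_toFinset
  have hmem : ∀ {P}, P ∈ T → P ∈ Ps := fun hP => hT ▸ hP
  have hfdisj : (T : Set G.Subgraph).PairwiseDisjoint f := fun P hP Q hQ hPQ =>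
    disjoint_of_forall_mem_of_disjoint (hdisj (hmem hP) (hmem hQ) hPQ) (hfV P (hmem hP))
      (hfV Q (hmem hQ))
  have hmatch : IsMatchingSet G (T.biUnion f) :=
    isMatchingSet_biUnion (fun P hP => hfM P (hmem hP)) (fun P hP => hfV P (hmem hP))
      (hT ▸ hdisj)
  calc 4 * (⋃ P ∈ Ps, P.verts).ncard ≤ 4 * ∑ P ∈ T, P.verts.ncard := by
        rw [← hT, Finset.set_biUnion_coe]
        exact Nat.mul_le_mul_left 4 (Finset.set_ncard_biUnion_le T _)
    _ ≤ 10 * ∑ P ∈ T, (f P).card := by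
        rw [Finset.mul_sum, Finset.mul_sum]
        refine Finset.sum_le_sum fun P hP => ?_
        have := (hPs P (hmem hP)).2
        rw [hfcard P (hmem hP)]
        omega
    _ = 10 * (T.biUnion f).card := by rw [Finset.card_biUnion hfdisj]
    _ ≤ 5 * (2 * M.card) := by have := hM.2 _ hmatch; omega

lemma four_mul_optValue_le {B : ℕ}
    (h : ∀ Ps : Set G.Subgraph, (∀ P ∈ Ps, IsPathSubgraph P ∧ 4 ≤ P.verts.ncard) →
      (Ps.Pairwise fun P Q => Disjoint P.verts Q.verts) → 4 * (⋃ P ∈ Ps, P.verts).ncard ≤ B) :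
    4 * optValue G ≤ B := by
  have : optValue G ≤ B / 4 := csSup_le' <| by
    rintro _ ⟨Ps, hPs, hdisj, rfl⟩
    have := h Ps hPs hdisj
    omega
  omega

end

theorem stmt1_general {V : Type*} [Fintype V] (G : SimpleGraph V)
    (M : Finset (Sym2 V)) (hM : IsMaxMatchingSet G M) :
    (∀ Ps : Set G.Subgraph,
      (∀ P ∈ Ps, IsPathSubgraph P ∧ 4 ≤ P.verts.ncard) →
      (Ps.Pairwise fun P Q => Disjoint P.verts Q.verts) →
      4 * (⋃ P ∈ Ps, P.verts).ncard ≤ 5 * (2 * M.card)) ∧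
    4 * optValue G ≤ 5 * (2 * M.card) :=
  have bound := fun _ hPs hdisj => four_mul_ncard_biUnion_le_of_isMaxMatchingSet hM hPs hdisj
  ⟨bound, four_mul_optValue_le bound⟩

/-- If `M` is a maximum matching of `G`, then for every collection of
vertex-disjoint paths of `G`, each of order at least 4, the total number of vertices
in the collection is at most `(5/4)·2|M|`; in particular `2|M| ≥ (4/5)·opt(G)`. -/
theorem stmt1 {V : Type*} [Fintype V] [DecidableEq V] (G : SimpleGraph V)
    (M : Finset (Sym2 V)) (hM : IsMaxMatchingSet G M) :
    (∀ Ps : Set G.Subgraph,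
      (∀ P ∈ Ps, IsPathSubgraph P ∧ 4 ≤ P.verts.ncard) →
      (Ps.Pairwise fun P Q => Disjoint P.verts Q.verts) →
      4 * (⋃ P ∈ Ps, P.verts).ncard ≤ 5 * (2 * M.card)) ∧
    4 * optValue G ≤ 5 * (2 * M.card) :=
  stmt1_general G M hM
end

section
/- Let G1 be a finite simple graph and B_1,…,B_h pairwise disjoint nonempty subsets of V(G1). Define an edge-weighted graph G' as follows: V(G') = V(G1) ∪ {x_i, y_i, z_i : 1 ≤ i ≤ h}, where the x_i, y_i, z_i are 3h new vertices; E(G') = E(G1) ∪ {{x_i,v}, {y_i,v} : v ∈ B_i, 1 ≤ i ≤ h} ∪ {{x_i,z_i}, {y_i,z_i} : 1 ≤ i ≤ h}; the edges {x_i,z_i} and {y_i,z_i} have weight 1 and all other edges have weight 0. Define f, g : V(G') → ℕ by f(v) = g(v) = 2 for v ∈ ∪_i B_i; f(v) = 0 and g(v) = 2 for v ∈ V(G1) \ ∪_i B_i; and f(x_i) = f(y_i) = f(z_i) = 0, g(x_i) = g(y_i) = |B_i|, g(z_i) = 1 for each i. Then the maximum weight of an [f,g]-factor of G' equals the maximum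 weight of a path-cycle cover of G1. -/
open SimpleGraph

attribute [local instance] Classical.propDecidable

/-- The auxiliary graph `G'` built from `G1` and the sets `B i`: the new vertices
`x_i, y_i, z_i` are `Sum.inr (i, 0)`, `Sum.inr (i, 1)`, `Sum.inr (i, 2)`. -/
def auxGraph {V1 : Type*} (G1 : SimpleGraph V1) (h : ℕ) (B : Fin h → Set V1) :
    SimpleGraph (V1 ⊕ (Fin h × Fin 3)) :=
  SimpleGraph.fromRel (fun a b =>
    (∃ u v : V1, a = Sum.inl u ∧ b = Sum.inl v ∧ G1.Adj u v) ∨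
    (∃ (i : Fin h) (v : V1), v ∈ B i ∧
      (a = Sum.inr (i, 0) ∨ a = Sum.inr (i, 1)) ∧ b = Sum.inl v) ∨
    (∃ i : Fin h, (a = Sum.inr (i, 0) ∨ a = Sum.inr (i, 1)) ∧ b = Sum.inr (i, 2)))

/-- The set of weight-1 edges of the auxiliary graph: the edges `{x_i, z_i}` and
`{y_i, z_i}`; all other edges have weight 0. -/
def weightOneEdges (V1 : Type*) (h : ℕ) : Set (Sym2 (V1 ⊕ (Fin h × Fin 3))) :=
  {e | ∃ i : Fin h,
    e = s(Sum.inr (i, (0 : Fin 3)), Sum.inr (i, (2 : Fin 3))) ∨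
    e = s(Sum.inr (i, (1 : Fin 3)), Sum.inr (i, (2 : Fin 3)))}

/-- The lower degree bound `f`. -/
noncomputable def fAux {V1 : Type*} (h : ℕ) (B : Fin h → Set V1) :
    (V1 ⊕ (Fin h × Fin 3)) → ℕ
  | Sum.inl v => if ∃ i, v ∈ B i then 2 else 0
  | Sum.inr _ => 0

/-- The upper degree bound `g`. -/
noncomputable def gAux {V1 : Type*} (h : ℕ) (B : Fin h → Set V1) :
    (V1 ⊕ (Fin h × Fin 3)) → ℕ
  | Sum.inl _ => 2
  | Sum.inr (i, j) => if j = (2 : Fin 3) then 1 else (B i).ncard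

/-!
A factor `F` of `G'` restricts to a path-cycle cover `C` of `G1` (its edges inside `V(G1)`).
A weight-one edge `x_i z_i` or `y_i z_i` in `F` forces `C` to saturate `B_i`: otherwise each
`v ∈ B_i` spends its degree 2 on `x_i` and `y_i`, and the endpoint joined to `z_i` gets degree
`|B_i| + 1`. As `z_i` has degree at most 1, the weight of `F` is at most the number of saturated
sets. Conversely, a path-cycle cover `C` extends to a factor of the same weight: join each
`v ∈ B_i` to the first `2 - deg_C v` of `x_i, y_i`, and add `y_i z_i` whenever `C` saturates
`B_i`; a saturating vertex of `B_i` leaves `y_i` a free unit of degree for it.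
-/

open Sum

section EdgeDeg

variable {α β W : Type*}

def IsFactor (G : SimpleGraph W) (f g : W → ℕ) (F : Set (Sym2 W)) : Prop :=
  F ⊆ G.edgeSet ∧ ∀ a, f a ≤ edgeDeg F a ∧ edgeDeg F a ≤ g a

def IsPathCycleCover (G : SimpleGraph W) (C : Set (Sym2 W)) : Prop :=
  C ⊆ G.edgeSet ∧ ∀ v, edgeDeg C v ≤ 2

lemma edgeDeg_union [Finite W] {F F' : Set (Sym2 W)} (hFF' : Disjoint F F') (w : W) :
    edgeDeg (F ∪ F') w = edgeDeg F w + edgeDeg F' w := by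
  have hsplit : {e ∈ F ∪ F' | w ∈ e} = {e ∈ F | w ∈ e} ∪ {e ∈ F' | w ∈ e} := by
    ext e
    simp only [Set.mem_union, Set.mem_ofPred_eq, or_and_right]
  rw [edgeDeg, hsplit]
  exact Set.ncard_union_eq (hFF'.mono (Set.sep_subset _ _) (Set.sep_subset _ _))

lemma edgeDeg_eq_zero_of_forall_notMem {F : Set (Sym2 W)} {w : W} (hw : ∀ e ∈ F, w ∉ e) :
    edgeDeg F w = 0 := by
  rw [edgeDeg, Set.sep_eq_empty_iff_mem_false.mpr hw, Set.ncard_empty]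

lemma edgeDeg_le_one [Finite W] {F : Set (Sym2 W)} {w : W}
    (hw : ∀ e ∈ F, ∀ e' ∈ F, w ∈ e → w ∈ e' → e = e') : edgeDeg F w ≤ 1 :=
  (Set.ncard_le_one).mpr fun e he e' he' => hw e he.1 e' he'.1 he.2 he'.2

lemma mem_of_edgeDeg_ge_two {F : Set (Sym2 W)} {w : W} {e₁ e₂ : Sym2 W}
    (hsub : {e ∈ F | w ∈ e} ⊆ {e₁, e₂}) (hdeg : 2 ≤ edgeDeg F w) : e₁ ∈ F ∧ e₂ ∈ F := by
  have hpair : ({e₁, e₂} : Set (Sym2 W)).ncard ≤ edgeDeg F w :=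
    (Set.ncard_insert_le _ _).trans (by simpa using hdeg)
  have heq := Set.eq_of_subset_of_ncard_le hsub hpair
  have h₁ : e₁ ∈ {e ∈ F | w ∈ e} := heq ▸ Set.mem_insert e₁ {e₂}
  have h₂ : e₂ ∈ {e ∈ F | w ∈ e} := heq ▸ Set.mem_insert_of_mem e₁ rfl
  exact ⟨h₁.1, h₂.1⟩

lemma edgeDeg_image_map {f : α → β} (hf : Function.Injective f) (C : Set (Sym2 α)) (v : α) :
    edgeDeg (Sym2.map f '' C) (f v) = edgeDeg C v := by
  have hfilter : {e ∈ Sym2.map f '' C | f v ∈ e} = Sym2.map f '' {e ∈ C | v ∈ e} := by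
    ext e
    constructor
    · rintro ⟨⟨c, hc, rfl⟩, hv⟩
      obtain ⟨a, ha, hav⟩ := Sym2.mem_map.mp hv
      exact ⟨c, ⟨hc, hf hav ▸ ha⟩, rfl⟩
    · rintro ⟨c, ⟨hc, hv⟩, rfl⟩
      exact ⟨⟨c, hc, rfl⟩, Sym2.mem_map.mpr ⟨v, hv, rfl⟩⟩
  rw [edgeDeg, hfilter, Set.ncard_image_of_injective _ (Sym2.map.injective hf), edgeDeg]

lemma edgeDeg_image_map_of_notMem_range {f : α → β} (C : Set (Sym2 α)) {w : β}
    (hw : w ∉ Set.range f) : edgeDeg (Sym2.map f '' C) w = 0 := by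
  refine edgeDeg_eq_zero_of_forall_notMem ?_
  rintro _ ⟨c, -, rfl⟩ hw'
  obtain ⟨a, -, rfl⟩ := Sym2.mem_map.mp hw'
  exact hw ⟨a, rfl⟩

lemma edgeDeg_preimage_map_le [Finite β] {f : α → β} (hf : Function.Injective f)
    (F : Set (Sym2 β)) (v : α) : edgeDeg (Sym2.map f ⁻¹' F) v ≤ edgeDeg F (f v) :=
  Set.ncard_le_ncard_of_injOn (Sym2.map f)
    (fun _ he => ⟨he.1, Sym2.mem_map.mpr ⟨v, he.2, rfl⟩⟩) (Sym2.map.injective hf).injOn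

lemma disjoint_image_map_inl_inr (C : Set (Sym2 α)) (D : Set (Sym2 β)) :
    Disjoint (Sym2.map inl '' C) (Sym2.map inr '' D) := by
  rw [Set.disjoint_left]
  rintro _ ⟨c, -, rfl⟩ ⟨d, -, hd⟩
  have : inl c.out.1 ∈ Sym2.map (inr : β → α ⊕ β) d :=
    hd ▸ Sym2.mem_map.mpr ⟨_, Sym2.out_fst_mem c, rfl⟩
  obtain ⟨b, -, hb⟩ := Sym2.mem_map.mp this
  exact inr_ne_inl hb

def crossEdges (P : Set (α × β)) : Set (Sym2 (α ⊕ β)) :=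
  (fun p => s(inl p.1, inr p.2)) '' P

lemma edgeDeg_crossEdges_inl (P : Set (α × β)) (a : α) :
    edgeDeg (crossEdges P) (inl a) = {b | (a, b) ∈ P}.ncard := by
  have hfilter :
      {e ∈ crossEdges P | inl a ∈ e} = (fun b => s(inl a, inr b)) '' {b | (a, b) ∈ P} := by
    ext e
    constructor
    · rintro ⟨⟨⟨a', b⟩, hP, rfl⟩, ha⟩
      obtain rfl : a = a' := by simpa using ha
      exact ⟨b, hP, rfl⟩
    · rintro ⟨b, hP, rfl⟩
      exact ⟨⟨(a, b), hP, rfl⟩, Sym2.mem_mk_left _ _⟩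
  rw [edgeDeg, hfilter, Set.ncard_image_of_injective _ fun b b' hb => by simpa using hb]

lemma edgeDeg_crossEdges_inr (P : Set (α × β)) (b : β) :
    edgeDeg (crossEdges P) (inr b) = {a | (a, b) ∈ P}.ncard := by
  have hfilter :
      {e ∈ crossEdges P | inr b ∈ e} = (fun a => s(inl a, inr b)) '' {a | (a, b) ∈ P} := by
    ext e
    constructor
    · rintro ⟨⟨⟨a, b'⟩, hP, rfl⟩, hb⟩
      obtain rfl : b = b' := by simpa using hb
      exact ⟨a, hP, rfl⟩
    · rintro ⟨a, hP, rfl⟩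
      exact ⟨⟨(a, b), hP, rfl⟩, Sym2.mem_mk_right _ _⟩
  rw [edgeDeg, hfilter, Set.ncard_image_of_injective _ fun a a' ha => by simpa using ha]

lemma disjoint_image_map_inl_crossEdges (C : Set (Sym2 α)) (P : Set (α × β)) :
    Disjoint (Sym2.map inl '' C) (crossEdges P) := by
  rw [Set.disjoint_left]
  rintro _ ⟨c, -, rfl⟩ ⟨p, -, hp⟩
  have : inr p.2 ∈ Sym2.map (inl : α → α ⊕ β) c := hp ▸ Sym2.mem_mk_right _ _
  obtain ⟨a, -, ha⟩ := Sym2.mem_map.mp this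
  exact inl_ne_inr ha

lemma disjoint_crossEdges_image_map_inr (P : Set (α × β)) (D : Set (Sym2 β)) :
    Disjoint (crossEdges P) (Sym2.map inr '' D) := by
  rw [Set.disjoint_left]
  rintro _ ⟨p, -, rfl⟩ ⟨d, -, hd⟩
  have : inl p.1 ∈ Sym2.map (inr : β → α ⊕ β) d := hd ▸ Sym2.mem_mk_left _ _
  obtain ⟨b, -, hb⟩ := Sym2.mem_map.mp this
  exact inr_ne_inl hb

end EdgeDeg

section AuxGraph

variable {V1 : Type*} {G1 : SimpleGraph V1} {h : ℕ} {B : Fin h → Set V1}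

lemma auxGraph_adj_inl_inl {u v : V1} :
    (auxGraph G1 h B).Adj (inl u) (inl v) ↔ G1.Adj u v := by
  simpa [auxGraph, G1.adj_comm v u] using fun huv : G1.Adj u v => huv.ne

lemma auxGraph_adj_inl_inr {v : V1} {i : Fin h} {j : Fin 3} :
    (auxGraph G1 h B).Adj (inl v) (inr (i, j)) ↔ v ∈ B i ∧ j ≠ 2 := by
  fin_cases j <;> simp [auxGraph]

lemma auxGraph_adj_inr_two {i : Fin h} {j : Fin 3} (hj : j ≠ 2) :
    (auxGraph G1 h B).Adj (inr (i, j)) (inr (i, 2)) := by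
  fin_cases j <;> simp_all [auxGraph]

end AuxGraph

section FactorToCover

variable {V1 : Type*} {G1 : SimpleGraph V1} {h : ℕ} {B : Fin h → Set V1}
  {F : Set (Sym2 (V1 ⊕ (Fin h × Fin 3)))}

lemma isPathCycleCover_preimage_inl [Finite V1]
    (hF : IsFactor (auxGraph G1 h B) (fAux h B) (gAux h B) F) :
    IsPathCycleCover G1 (Sym2.map inl ⁻¹' F) := by
  refine ⟨fun c hc => ?_, fun v => (edgeDeg_preimage_map_le inl_injective F v).trans (hF.2 _).2⟩
  induction c using Sym2.ind with
  | _ u v => exact auxGraph_adj_inl_inl.mp (hF.1 hc)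

lemma mem_of_not_saturates (hdisj : ∀ i j : Fin h, i ≠ j → Disjoint (B i) (B j))
    (hF : IsFactor (auxGraph G1 h B) (fAux h B) (gAux h B) F) {i : Fin h}
    (hsat : ¬Saturates (Sym2.map inl ⁻¹' F) (B i)) {v : V1} (hv : v ∈ B i) :
    s(inl v, inr (i, 0)) ∈ F ∧ s(inl v, inr (i, 1)) ∈ F := by
  refine mem_of_edgeDeg_ge_two (w := inl v) ?_ ?_
  · rintro e ⟨he, hve⟩
    obtain ⟨b, rfl⟩ := Sym2.mem_iff_exists.mp hve
    rcases b with u | ⟨i', j⟩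
    · exact absurd ⟨s(v, u), he, v, hv, Sym2.mem_mk_left _ _⟩ hsat
    · obtain ⟨hvi', hj⟩ := auxGraph_adj_inl_inr.mp (hF.1 he)
      obtain rfl : i' = i := by
        by_contra hne
        exact (hdisj i' i hne).ne_of_mem hvi' hv rfl
      fin_cases j <;> simp_all
  · simpa [fAux, show ∃ j, v ∈ B j from ⟨i, hv⟩] using (hF.2 (inl v)).1

lemma saturates_of_mem_weightOneEdges [Finite V1]
    (hdisj : ∀ i j : Fin h, i ≠ j → Disjoint (B i) (B j))
    (hF : IsFactor (auxGraph G1 h B) (fAux h B) (gAux h B) F) {i : Fin h} {c : Fin 3}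
    (hc : c ≠ 2) (hz : s(inr (i, c), inr (i, 2)) ∈ F) :
    Saturates (Sym2.map inl ⁻¹' F) (B i) := by
  by_contra hsat
  have hstar : ∀ v ∈ B i, s(inl v, inr (i, c)) ∈ F := fun v hv => by
    have := mem_of_not_saturates hdisj hF hsat hv
    fin_cases c <;> simp_all
  have hinj : Function.Injective fun v : V1 => (s(inl v, inr (i, c)) : Sym2 (V1 ⊕ _)) :=
    fun v v' hv => by simpa using hv
  have hnotMem : s(inr (i, c), inr (i, 2)) ∉ (fun v => s(inl v, inr (i, c))) '' B i := by
    rintro ⟨v, -, hv⟩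
    simp at hv
  have hsub : insert s(inr (i, c), inr (i, 2)) ((fun v => s(inl v, inr (i, c))) '' B i) ⊆
      {e ∈ F | inr (i, c) ∈ e} := by
    rintro e (rfl | ⟨v, hv, rfl⟩)
    · exact ⟨hz, Sym2.mem_mk_left _ _⟩
    · exact ⟨hstar v hv, Sym2.mem_mk_right _ _⟩
  have hlarge : (B i).ncard + 1 ≤ edgeDeg F (inr (i, c)) := by
    calc (B i).ncard + 1
        = (insert s(inr (i, c), inr (i, 2)) ((fun v => s(inl v, inr (i, c))) '' B i)).ncard := by
          rw [Set.ncard_insert_of_notMem hnotMem, Set.ncard_image_of_injective _ hinj]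
      _ ≤ edgeDeg F (inr (i, c)) := Set.ncard_le_ncard hsub
  have hsmall : edgeDeg F (inr (i, c)) ≤ (B i).ncard := by
    simpa [gAux, hc] using (hF.2 (inr (i, c))).2
  omega

lemma ncard_weightOneEdges_le [Finite V1]
    (hdisj : ∀ i j : Fin h, i ≠ j → Disjoint (B i) (B j))
    (hF : IsFactor (auxGraph G1 h B) (fAux h B) (gAux h B) F) :
    (F ∩ weightOneEdges V1 h).ncard ≤ {i | Saturates (Sym2.map inl ⁻¹' F) (B i)}.ncard := by
  set T := {i | Saturates (Sym2.map inl ⁻¹' F) (B i)}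
  have hcover : F ∩ weightOneEdges V1 h ⊆ ⋃ i ∈ T.toFinset, {e ∈ F | inr (i, 2) ∈ e} := by
    rintro e ⟨he, i, rfl | rfl⟩ <;>
      exact Set.mem_biUnion
        (Set.mem_toFinset.mpr (saturates_of_mem_weightOneEdges hdisj hF (by decide) he))
        ⟨he, Sym2.mem_mk_right _ _⟩
  calc (F ∩ weightOneEdges V1 h).ncard
      ≤ (⋃ i ∈ T.toFinset, {e ∈ F | inr (i, 2) ∈ e}).ncard := Set.ncard_le_ncard hcover
    _ ≤ ∑ i ∈ T.toFinset, edgeDeg F (inr (i, 2)) := Finset.set_ncard_biUnion_le _ _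
    _ ≤ ∑ _i ∈ T.toFinset, 1 := Finset.sum_le_sum fun i _ => by
          simpa [gAux] using (hF.2 (inr (i, 2))).2
    _ = T.ncard := by simp [Set.ncard_eq_toFinset_card']

end FactorToCover

lemma ncard_fin_val_lt {n m : ℕ} (hm : m ≤ n) : {j : Fin n | (j : ℕ) < m}.ncard = m := by
  rw [Set.ncard_eq_toFinset_card', Set.toFinset_ofPred]
  convert Fin.card_filter_val_lt (n := n) (m := m) using 1
  exact (min_eq_right hm).symm

section CoverToFactor

variable {V1 : Type*} {G1 : SimpleGraph V1} {h : ℕ} {B : Fin h → Set V1} {C : Set (Sym2 V1)}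

/-- `(v, (i, j))` stands for the edge from `v` to `x_i` (`j = 0`) or `y_i` (`j = 1`). -/
def padding (B : Fin h → Set V1) (C : Set (Sym2 V1)) : Set (V1 × (Fin h × Fin 3)) :=
  {p | p.1 ∈ B p.2.1 ∧ (p.2.2 : ℕ) < 2 - edgeDeg C p.1}

def yzEdges (B : Fin h → Set V1) (C : Set (Sym2 V1)) : Set (Sym2 (Fin h × Fin 3)) :=
  (fun i => s((i, 1), (i, 2))) '' {i | Saturates C (B i)}

def factorOfCover (B : Fin h → Set V1) (C : Set (Sym2 V1)) :
    Set (Sym2 (V1 ⊕ (Fin h × Fin 3))) :=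
  Sym2.map inl '' C ∪ crossEdges (padding B C) ∪ Sym2.map inr '' yzEdges B C

lemma edgeDeg_factorOfCover [Finite V1] (w : V1 ⊕ (Fin h × Fin 3)) :
    edgeDeg (factorOfCover B C) w = edgeDeg (Sym2.map inl '' C) w +
      edgeDeg (crossEdges (padding B C)) w + edgeDeg (Sym2.map inr '' yzEdges B C) w := by
  have hdisj : Disjoint (Sym2.map inl '' C ∪ crossEdges (padding B C))
      (Sym2.map inr '' yzEdges B C) :=
    Disjoint.union_left (disjoint_image_map_inl_inr _ _) (disjoint_crossEdges_image_map_inr _ _)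
  rw [factorOfCover, edgeDeg_union hdisj, edgeDeg_union (disjoint_image_map_inl_crossEdges _ _)]

lemma factorOfCover_subset_edgeSet (hC : C ⊆ G1.edgeSet) :
    factorOfCover B C ⊆ (auxGraph G1 h B).edgeSet := by
  rintro _ ((⟨c, hc, rfl⟩ | ⟨⟨v, i, j⟩, ⟨hv, hj⟩, rfl⟩) | ⟨_, ⟨i, -, rfl⟩, rfl⟩)
  · induction c using Sym2.ind with
    | _ u v => exact auxGraph_adj_inl_inl.mpr (hC hc)
  · refine auxGraph_adj_inl_inr.mpr ⟨hv, ?_⟩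
    rintro rfl
    exact (Nat.sub_le 2 _).not_gt hj
  · exact auxGraph_adj_inr_two (by decide)

lemma edgeDeg_factorOfCover_inl [Finite V1]
    (hdisj : ∀ i j : Fin h, i ≠ j → Disjoint (B i) (B j)) {v : V1} (hv : edgeDeg C v ≤ 2) :
    edgeDeg (factorOfCover B C) (inl v) = if ∃ i, v ∈ B i then 2 else edgeDeg C v := by
  rw [edgeDeg_factorOfCover, edgeDeg_image_map inl_injective, edgeDeg_crossEdges_inl,
    edgeDeg_image_map_of_notMem_range _ (by simp), add_zero]
  split_ifs with hB
  · obtain ⟨i, hi⟩ := hB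
    have hpad : {b | (v, b) ∈ padding B C} =
        Prod.mk i '' {j : Fin 3 | (j : ℕ) < 2 - edgeDeg C v} := by
      ext ⟨i', j⟩
      simp only [padding, Set.mem_ofPred_eq, Set.mem_image, Prod.mk.injEq]
      constructor
      · rintro ⟨hi', hj⟩
        obtain rfl : i = i' := by
          by_contra hne
          exact (hdisj i i' hne).ne_of_mem hi hi' rfl
        exact ⟨j, hj, rfl, rfl⟩
      · rintro ⟨j, hj, rfl, rfl⟩
        exact ⟨hi, hj⟩
    rw [hpad, Set.ncard_image_of_injective _ (Prod.mk_right_injective i),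
      ncard_fin_val_lt (by omega)]
    omega
  · have hpad : {b | (v, b) ∈ padding B C} = ∅ :=
      Set.eq_empty_of_forall_notMem fun b hb => hB ⟨b.1, hb.1⟩
    rw [hpad, Set.ncard_empty, add_zero]

lemma edgeDeg_yzEdges_le_one (p : Fin h × Fin 3) : edgeDeg (yzEdges B C) p ≤ 1 := by
  refine edgeDeg_le_one ?_
  rintro _ ⟨i, -, rfl⟩ _ ⟨i', -, rfl⟩ hi hi'
  obtain rfl : p.1 = i := by rcases Sym2.mem_iff.mp hi with rfl | rfl <;> rfl
  obtain rfl : p.1 = i' := by rcases Sym2.mem_iff.mp hi' with rfl | rfl <;> rfl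
  rfl

lemma edgeDeg_yzEdges_eq_zero {i : Fin h} {j : Fin 3} (hij : j = 0 ∨ ¬Saturates C (B i)) :
    edgeDeg (yzEdges B C) (i, j) = 0 := by
  refine edgeDeg_eq_zero_of_forall_notMem ?_
  rintro _ ⟨i', hi', rfl⟩ hmem
  rcases Sym2.mem_iff.mp hmem with heq | heq <;> simp only [Prod.mk.injEq] at heq <;>
    obtain ⟨rfl, rfl⟩ := heq <;> simp_all

lemma edgeDeg_factorOfCover_inr_le [Finite V1] (i : Fin h) (j : Fin 3) :
    edgeDeg (factorOfCover B C) (inr (i, j)) ≤ gAux h B (inr (i, j)) := by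
  rw [edgeDeg_factorOfCover, edgeDeg_image_map_of_notMem_range _ (by simp),
    edgeDeg_crossEdges_inr, edgeDeg_image_map inr_injective, zero_add]
  have hpad : {v | (v, (i, j)) ∈ padding B C} ⊆ B i := fun v hv => hv.1
  have hyz := edgeDeg_yzEdges_le_one (B := B) (C := C) (i, j)
  obtain rfl | rfl | rfl : j = 0 ∨ j = 1 ∨ j = 2 := by fin_cases j <;> simp
  · simpa [gAux, edgeDeg_yzEdges_eq_zero (Or.inl rfl)] using Set.ncard_le_ncard hpad
  · by_cases hsat : Saturates C (B i)
    · obtain ⟨e, he, v, hv, hve⟩ := hsat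
      have hdeg : 0 < edgeDeg C v := (Set.ncard_pos).mpr ⟨e, he, hve⟩
      have hlt : {v | (v, (i, 1)) ∈ padding B C}.ncard < (B i).ncard :=
        Set.ncard_lt_ncard ((Set.ssubset_iff_of_subset hpad).mpr ⟨v, hv, fun hpv => by
          have : 1 < 2 - edgeDeg C v := hpv.2
          omega⟩)
      simp only [gAux, show (1 : Fin 3) ≠ 2 by decide, if_false]
      omega
    · simpa [gAux, edgeDeg_yzEdges_eq_zero (Or.inr hsat)] using Set.ncard_le_ncard hpad
  · have hempty : {v | (v, (i, 2)) ∈ padding B C} = ∅ :=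
      Set.eq_empty_of_forall_notMem fun v hv => (Nat.sub_le 2 _).not_gt hv.2
    simpa [gAux, hempty] using hyz

lemma isFactor_factorOfCover [Finite V1] (hdisj : ∀ i j : Fin h, i ≠ j → Disjoint (B i) (B j))
    (hC : IsPathCycleCover G1 C) :
    IsFactor (auxGraph G1 h B) (fAux h B) (gAux h B) (factorOfCover B C) := by
  refine ⟨factorOfCover_subset_edgeSet hC.1, ?_⟩
  rintro (v | ⟨i, j⟩)
  · rw [edgeDeg_factorOfCover_inl hdisj (hC.2 v)]
    simp only [fAux, gAux]
    split_ifs <;> simp [hC.2 v]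
  · exact ⟨Nat.zero_le _, edgeDeg_factorOfCover_inr_le i j⟩

lemma factorOfCover_inter_weightOneEdges :
    factorOfCover B C ∩ weightOneEdges V1 h = Sym2.map inr '' yzEdges B C := by
  have hW : weightOneEdges V1 h ⊆ Sym2.map inr '' Set.univ := by
    rintro _ ⟨i, rfl | rfl⟩
    exacts [⟨s((i, 0), (i, 2)), trivial, rfl⟩, ⟨s((i, 1), (i, 2)), trivial, rfl⟩]
  have hyz : Sym2.map inr '' yzEdges B C ⊆ weightOneEdges V1 h := by
    rintro _ ⟨_, ⟨i, -, rfl⟩, rfl⟩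
    exact ⟨i, Or.inr rfl⟩
  have hrest : Disjoint (Sym2.map inl '' C ∪ crossEdges (padding B C)) (weightOneEdges V1 h) :=
    (Disjoint.union_left (disjoint_image_map_inl_inr _ _)
      (disjoint_crossEdges_image_map_inr _ _)).mono_right hW
  rw [factorOfCover, Set.union_inter_distrib_right, hrest.inter_eq, Set.empty_union,
    Set.inter_eq_left.mpr hyz]

lemma ncard_image_map_inr_yzEdges :
    (Sym2.map (inr : _ → V1 ⊕ _) '' yzEdges B C).ncard = {i | Saturates C (B i)}.ncard := by
  rw [Set.ncard_image_of_injective _ (Sym2.map.injective inr_injective), yzEdges,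
    Set.ncard_image_of_injective _ fun i i' hi => by simpa using hi]

end CoverToFactor

theorem stmt3_general {V1 : Type*} [Fintype V1] (G1 : SimpleGraph V1)
    (h : ℕ) (B : Fin h → Set V1)
    (hdisj : ∀ i j : Fin h, i ≠ j → Disjoint (B i) (B j)) :
    sSup {w : ℕ | ∃ F : Set (Sym2 (V1 ⊕ (Fin h × Fin 3))),
        F ⊆ (auxGraph G1 h B).edgeSet ∧
        (∀ a, fAux h B a ≤ edgeDeg F a ∧ edgeDeg F a ≤ gAux h B a) ∧
        w = (F ∩ weightOneEdges V1 h).ncard} =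
    sSup {w : ℕ | ∃ C : Set (Sym2 V1),
        C ⊆ G1.edgeSet ∧ (∀ v, edgeDeg C v ≤ 2) ∧
        w = {i : Fin h | Saturates C (B i)}.ncard} := by
  refine csSup_eq_csSup_of_forall_exists_le ?_ ?_
  · rintro _ ⟨F, hF, hdeg, rfl⟩
    have hcover := isPathCycleCover_preimage_inl ⟨hF, hdeg⟩
    exact ⟨_, ⟨_, hcover.1, hcover.2, rfl⟩, ncard_weightOneEdges_le hdisj ⟨hF, hdeg⟩⟩
  · rintro _ ⟨C, hC, hdeg, rfl⟩
    obtain ⟨hF, hFdeg⟩ := isFactor_factorOfCover hdisj (B := B) ⟨hC, hdeg⟩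
    refine ⟨_, ⟨factorOfCover B C, hF, hFdeg, rfl⟩, ?_⟩
    rw [factorOfCover_inter_weightOneEdges, ncard_image_map_inr_yzEdges]

/-- the maximum weight of an `[f,g]`-factor of the auxiliary graph `G'`
equals the maximum weight of a path-cycle cover of `G1` (the weight of a path-cycle
cover being the number of sets `B i` it saturates). -/
theorem stmt3 {V1 : Type*} [Fintype V1] [DecidableEq V1] (G1 : SimpleGraph V1)
    (h : ℕ) (B : Fin h → Set V1)
    (hne : ∀ i, (B i).Nonempty)
    (hdisj : ∀ i j : Fin h, i ≠ j → Disjoint (B i) (B j)) :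
    sSup {w : ℕ | ∃ F : Set (Sym2 (V1 ⊕ (Fin h × Fin 3))),
        F ⊆ (auxGraph G1 h B).edgeSet ∧
        (∀ a, fAux h B a ≤ edgeDeg F a ∧ edgeDeg F a ≤ gAux h B a) ∧
        w = (F ∩ weightOneEdges V1 h).ncard} =
    sSup {w : ℕ | ∃ C : Set (Sym2 V1),
        C ⊆ G1.edgeSet ∧ (∀ v, edgeDeg C v ≤ 2) ∧
        w = {i : Fin h | Saturates C (B i)}.ncard} :=
  stmt3_general G1 h B hdisj
end

section
/- Let G be a finite simple graph and 𝒦 a collection of pairwise disjoint nonempty subsets of V(G), with a designated subcollection ℬ ⊆ 𝒦 of 'bad' members. Let G1 be the set of all edges {u,v} of G such that u and v lie in two different members of 𝒦, at least one of which is bad. Let C ⊆ G1 be a path-cycle cover of (V(G), G1) such that for every edge e ∈ C, the set C \ {e} saturates strictly fewer bad members of 𝒦 than C does. Define a graph 𝒢 on vertex set 𝒦 by joining K, K' ∈ 𝒦 whenever some edge of C has one endpoint in K and the other in K'. Then: (1) every connected component of 𝒢 is an isolated vertex, a single edge, or a star; (2) if a component of 𝒢 is a single edge, then at least one of its two endpoints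 is a bad member; (3) if a component of 𝒢 is a star, then every satellite (non-center vertex) of the star is a bad member. -/
open SimpleGraph

/-!
Minimality says that every edge `e` of `C` is the only edge of `C` meeting some bad member
`B`; since the members of `𝒦` are disjoint, `B` is the member containing an endpoint of `e`,
so in the contracted graph every edge has a bad endpoint of degree one. A graph in which
every edge has an endpoint of degree one is a disjoint union of stars; in a star with at
least two satellites the center has degree at least two, so the bad endpoints are the satellites.
-/

namespace SimpleGraph

variable {α : Type*} {H : SimpleGraph α}

theorem Reachable.mem_of_forall_adj_mem {S : Set α} (hS : ∀ a ∈ S, ∀ b, H.Adj a b → b ∈ S)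
    {a b : α} (hab : H.Reachable a b) (ha : a ∈ S) : b ∈ S := by
  rw [reachable_iff_reflTransGen] at hab
  induction hab with
  | refl => exact ha
  | tail _ hbc ih => exact hS _ ih _ hbc

theorem adj_of_neighborSet_eq_singleton {a b : α} (h : H.neighborSet a = {b}) : H.Adj a b :=
  (h ▸ rfl : b ∈ H.neighborSet a)

theorem neighborSet_eq_singleton_of_mem_supp {y K : α}
    (hy : ∀ z, H.Adj y z → H.neighborSet z = {y})
    (hK : K ∈ (H.connectedComponentMk y).supp) (hKy : K ≠ y) : H.neighborSet K = {y} := by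
  let S : Set α := insert y {z | H.neighborSet z = {y}}
  have hS : ∀ a ∈ S, ∀ b, H.Adj a b → b ∈ S := by
    rintro a (rfl | ha) b hab
    · exact Or.inr (hy b hab)
    · exact Or.inl (ha ▸ hab : b ∈ ({y} : Set α))
  have hKS : K ∈ S :=
    (ConnectedComponent.exact hK).symm.mem_of_forall_adj_mem hS (Set.mem_insert y _)
  exact hKS.resolve_left hKy

namespace ConnectedComponent

theorem exists_star_center
    (hedge : ∀ a b, H.Adj a b → H.neighborSet a = {b} ∨ H.neighborSet b = {a})
    (c : H.ConnectedComponent) :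
    ∃ K₀ ∈ c.supp, ∀ K ∈ c.supp, K ≠ K₀ → H.neighborSet K = {K₀} := by
  induction c using ConnectedComponent.ind with | h v => ?_
  -- A center is a vertex all of whose neighbours are leaves hanging on it.
  suffices ∃ y, H.Reachable v y ∧ ∀ z, H.Adj y z → H.neighborSet z = {y} by
    obtain ⟨y, hvy, hy⟩ := this
    rw [ConnectedComponent.sound hvy]
    exact ⟨y, rfl, fun K hK hKy => neighborSet_eq_singleton_of_mem_supp hy hK hKy⟩
  by_cases hv : ∃ w, H.Adj v w
  · obtain ⟨w, hvw⟩ := hv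
    obtain ⟨x, y, hxy, hvxy⟩ : ∃ x y, H.neighborSet x = {y} ∧ H.Reachable v y := by
      rcases hedge v w hvw with h | h
      · exact ⟨v, w, h, hvw.reachable⟩
      · exact ⟨w, v, h, Reachable.refl v⟩
    refine ⟨y, hvxy, fun z hyz => ?_⟩
    rcases hedge y z hyz with hy | hz
    · have hzx : z = x := by
        have hx : x ∈ H.neighborSet y := (adj_of_neighborSet_eq_singleton hxy).symm
        rw [hy] at hx
        exact hx.symm
      exact hzx ▸ hxy
    · exact hz
  · simp only [not_exists] at hv
    exact ⟨v, Reachable.refl v, fun z hvz => absurd hvz (hv z)⟩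

variable {P : α → Prop} {c : H.ConnectedComponent} {K₀ : α}

theorem pred_or_pred_of_supp_eq_pair
    (hedge : ∀ a b, H.Adj a b → (P a ∧ H.neighborSet a = {b}) ∨ (P b ∧ H.neighborSet b = {a}))
    (hK₀ : K₀ ∈ c.supp) (hstar : ∀ K ∈ c.supp, K ≠ K₀ → H.neighborSet K = {K₀})
    {K₁ K₂ : α} (h12 : K₁ ≠ K₂) (hc : c.supp = {K₁, K₂}) : P K₁ ∨ P K₂ := by
  have h1 : K₁ ∈ c.supp := hc ▸ Set.mem_insert _ _
  have h2 : K₂ ∈ c.supp := hc ▸ Set.mem_insert_of_mem _ rfl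
  rcases (hc ▸ hK₀ : K₀ ∈ ({K₁, K₂} : Set α)) with rfl | rfl
  · exact ((hedge _ _ (adj_of_neighborSet_eq_singleton (hstar K₂ h2 h12.symm))).imp
      And.left And.left).symm
  · exact (hedge _ _ (adj_of_neighborSet_eq_singleton (hstar K₁ h1 h12))).imp And.left And.left

theorem pred_of_mem_supp_of_three_le_ncard
    (hedge : ∀ a b, H.Adj a b → (P a ∧ H.neighborSet a = {b}) ∨ (P b ∧ H.neighborSet b = {a}))
    (hstar : ∀ K ∈ c.supp, K ≠ K₀ → H.neighborSet K = {K₀}) (h3 : 3 ≤ c.supp.ncard)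
    {K : α} (hK : K ∈ c.supp) (hKK₀ : K ≠ K₀) : P K := by
  refine ((hedge K K₀ (adj_of_neighborSet_eq_singleton (hstar K hK hKK₀))).resolve_right
    fun ⟨_, hN₀⟩ => ?_).1
  -- If the center had degree one, the component would be the single edge `K₀K`.
  have hsub : c.supp ⊆ {K₀, K} := fun L hL => by
    by_cases hLK₀ : L = K₀
    · exact Or.inl hLK₀
    · exact Or.inr (hN₀ ▸ (adj_of_neighborSet_eq_singleton (hstar L hL hLK₀)).symm :
        L ∈ ({K} : Set α))
  have := (Set.ncard_le_ncard hsub).trans (Set.ncard_insert_le K₀ {K})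
  rw [Set.ncard_singleton] at this
  omega

end ConnectedComponent

end SimpleGraph

section Contraction

variable {W : Type*} {𝒦 ℬ : Set (Set W)} {C : Set (Sym2 W)}

theorem Saturates.exists_mem_of_not_saturates_sdiff {B : Set W} (hC : Saturates C B) {e : Sym2 W}
    (he : ¬ Saturates (C \ {e}) B) : ∃ w ∈ B, w ∈ e := by
  obtain ⟨f, hf, w, hwB, hwf⟩ := hC
  by_cases hfe : f = e
  · exact ⟨w, hwB, hfe ▸ hwf⟩
  · exact absurd ⟨f, ⟨hf, hfe⟩, w, hwB, hwf⟩ he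

theorem exists_not_saturates_sdiff_of_ncard_lt {e : Sym2 W}
    (he : {K ∈ ℬ | Saturates (C \ {e}) K}.ncard < {K ∈ ℬ | Saturates C K}.ncard) :
    ∃ B ∈ ℬ, (∃ w ∈ B, w ∈ e) ∧ ¬ Saturates (C \ {e}) B := by
  have hsub : {K ∈ ℬ | Saturates (C \ {e}) K} ⊆ {K ∈ ℬ | Saturates C K} :=
    fun K ⟨hK, f, hf, w, hw, hwf⟩ => ⟨hK, f, hf.1, w, hw, hwf⟩
  obtain ⟨B, ⟨hB, hBC⟩, hBn⟩ :=
    Set.exists_of_ssubset (hsub.ssubset_of_ne fun h => he.ne (congrArg Set.ncard h))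
  have hBe : ¬ Saturates (C \ {e}) B := fun h => hBn ⟨hB, h⟩
  exact ⟨B, hB, hBC.exists_mem_of_not_saturates_sdiff hBe, hBe⟩

variable (𝒦 C) in
def contraction : SimpleGraph 𝒦 :=
  SimpleGraph.fromRel fun K K' : 𝒦 =>
    ∃ e ∈ C, ∃ u v : W, e = s(u, v) ∧ u ∈ (K : Set W) ∧ v ∈ (K' : Set W)

theorem contraction_adj_iff {K K' : 𝒦} :
    (contraction 𝒦 C).Adj K K' ↔ K ≠ K' ∧ ∃ u ∈ (K : Set W), ∃ v ∈ (K' : Set W), s(u, v) ∈ C := by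
  simp only [contraction, SimpleGraph.fromRel_adj]
  constructor
  · rintro ⟨hKK', ⟨e, he, u, v, rfl, hu, hv⟩ | ⟨e, he, u, v, rfl, hu, hv⟩⟩
    · exact ⟨hKK', u, hu, v, hv, he⟩
    · exact ⟨hKK', v, hv, u, hu, Sym2.eq_swap ▸ he⟩
  · rintro ⟨hKK', u, hu, v, hv, he⟩
    exact ⟨hKK', Or.inl ⟨_, he, u, v, rfl, hu, hv⟩⟩

theorem eq_of_mem_of_pairwiseDisjoint (hdisj : 𝒦.PairwiseDisjoint id) {K K' : 𝒦} {w : W}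
    (hK : w ∈ (K : Set W)) (hK' : w ∈ (K' : Set W)) : K = K' :=
  Subtype.ext (hdisj.elim_set K.2 K'.2 w hK hK')

theorem contraction_neighborSet_eq_singleton (hdisj : 𝒦.PairwiseDisjoint id) {X Y : 𝒦}
    {u v : W} (huv : s(u, v) ∈ C) (hu : u ∈ (X : Set W)) (hv : v ∈ (Y : Set W)) (hXY : X ≠ Y)
    (hX : ¬ Saturates (C \ {s(u, v)}) X) : (contraction 𝒦 C).neighborSet X = {Y} := by
  ext Z
  refine ⟨fun hXZ => ?_, by rintro rfl; exact contraction_adj_iff.2 ⟨hXY, u, hu, v, hv, huv⟩⟩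
  obtain ⟨-, a, ha, b, hb, habC⟩ := contraction_adj_iff.1 hXZ
  have hab : s(a, b) = s(u, v) := by
    by_contra hne
    exact hX ⟨s(a, b), ⟨habC, hne⟩, a, ha, Sym2.mem_mk_left a b⟩
  rcases Sym2.eq_iff.1 hab with ⟨rfl, rfl⟩ | ⟨rfl, rfl⟩
  · exact eq_of_mem_of_pairwiseDisjoint hdisj hb hv
  · exact absurd (eq_of_mem_of_pairwiseDisjoint hdisj ha hv) hXY

theorem contraction_adj_bad_leaf (hBK : ℬ ⊆ 𝒦) (hdisj : 𝒦.PairwiseDisjoint id)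
    (hmin : ∀ e ∈ C, ∃ B ∈ ℬ, (∃ w ∈ B, w ∈ e) ∧ ¬ Saturates (C \ {e}) B) {K K' : 𝒦}
    (hKK' : (contraction 𝒦 C).Adj K K') :
    ((K : Set W) ∈ ℬ ∧ (contraction 𝒦 C).neighborSet K = {K'}) ∨
      ((K' : Set W) ∈ ℬ ∧ (contraction 𝒦 C).neighborSet K' = {K}) := by
  obtain ⟨hne, u, hu, v, hv, huv⟩ := contraction_adj_iff.1 hKK'
  obtain ⟨B, hB, ⟨w, hwB, hw⟩, hBC⟩ := hmin _ huv
  have key : ∀ {X Y : 𝒦} {x y : W}, s(x, y) = s(u, v) → x ∈ (X : Set W) → y ∈ (Y : Set W) →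
      X ≠ Y → x ∈ B → (X : Set W) ∈ ℬ ∧ (contraction 𝒦 C).neighborSet X = {Y} := by
    intro X Y x y hxy hx hy hXY hxB
    have hXB : X = ⟨B, hBK hB⟩ := eq_of_mem_of_pairwiseDisjoint hdisj hx hxB
    subst hXB
    exact ⟨hB, contraction_neighborSet_eq_singleton hdisj (hxy ▸ huv) hx hy hXY (hxy ▸ hBC)⟩
  rcases Sym2.mem_iff.1 hw with rfl | rfl
  · exact Or.inl (key rfl hu hv hne hwB)
  · exact Or.inr (key Sym2.eq_swap hv hu hne.symm hwB)

end Contraction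

theorem stmt5_general {V : Type*} (𝒦 ℬ : Set (Set V)) (hBK : ℬ ⊆ 𝒦)
    (hdisj : 𝒦.Pairwise fun K K' => Disjoint K K')
    (C : Set (Sym2 V))
    (hCmin : ∀ e ∈ C,
      ({K ∈ ℬ | Saturates (C \ {e}) K}).ncard < ({K ∈ ℬ | Saturates C K}).ncard)
    (𝒢 : SimpleGraph ↥𝒦)
    (h𝒢 : 𝒢 = SimpleGraph.fromRel (fun K K' : ↥𝒦 =>
      ∃ e ∈ C, ∃ u v : V, e = s(u, v) ∧ u ∈ (K : Set V) ∧ v ∈ (K' : Set V))) :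
    ∀ c : 𝒢.ConnectedComponent,
      (∃ K₀ ∈ c.supp, ∀ K ∈ c.supp, K ≠ K₀ → 𝒢.neighborSet K = {K₀}) ∧
      (∀ K₁ K₂ : ↥𝒦, K₁ ≠ K₂ → c.supp = {K₁, K₂} →
        ((K₁ : Set V) ∈ ℬ ∨ (K₂ : Set V) ∈ ℬ)) ∧
      (3 ≤ c.supp.ncard → ∃ K₀ ∈ c.supp,
        (∀ K ∈ c.supp, K ≠ K₀ → 𝒢.neighborSet K = {K₀}) ∧
        (∀ K ∈ c.supp, K ≠ K₀ → (K : Set V) ∈ ℬ)) := by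
  change 𝒢 = contraction 𝒦 C at h𝒢
  subst h𝒢
  have hedge : ∀ K K', (contraction 𝒦 C).Adj K K' →
      ((K : Set V) ∈ ℬ ∧ (contraction 𝒦 C).neighborSet K = {K'}) ∨
        ((K' : Set V) ∈ ℬ ∧ (contraction 𝒦 C).neighborSet K' = {K}) :=
    fun _ _ => contraction_adj_bad_leaf hBK hdisj
      fun e he => exists_not_saturates_sdiff_of_ncard_lt (hCmin e he)
  intro c
  obtain ⟨K₀, hK₀, hstar⟩ :=
    c.exists_star_center fun K K' h => (hedge K K' h).imp And.right And.right
  exact ⟨⟨K₀, hK₀, hstar⟩,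
    fun _ _ h12 hc => c.pred_or_pred_of_supp_eq_pair hedge hK₀ hstar h12 hc,
    fun h3 => ⟨K₀, hK₀, hstar,
      fun _ hK hKK₀ => c.pred_of_mem_supp_of_three_le_ncard hedge hstar h3 hK hKK₀⟩⟩

/-- structure of the contracted graph `𝒢` on the members of `𝒦` induced
by an inclusionwise-minimal maximum path-cycle cover `C`: every connected component is
an isolated vertex, a single edge, or a star (uniformly: it has a vertex `K₀` such that
every other vertex of the component has neighbor set exactly `{K₀}`); if a component is
a single edge then one of its endpoints is bad; and if a component is a star (it has at
least 3 vertices) then all satellites are bad. -/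
theorem stmt5 {V : Type*} [Fintype V] [DecidableEq V] (G : SimpleGraph V)
    (𝒦 ℬ : Set (Set V)) (hBK : ℬ ⊆ 𝒦)
    (hne : ∀ K ∈ 𝒦, K.Nonempty)
    (hdisj : 𝒦.Pairwise fun K K' => Disjoint K K')
    (G1 : Set (Sym2 V))
    (hG1 : G1 = {e | e ∈ G.edgeSet ∧ ∃ u v : V, e = s(u, v) ∧
      ∃ K ∈ 𝒦, ∃ K' ∈ 𝒦, K ≠ K' ∧ u ∈ K ∧ v ∈ K' ∧ (K ∈ ℬ ∨ K' ∈ ℬ)})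
    (C : Set (Sym2 V)) (hCsub : C ⊆ G1) (hCdeg : ∀ v, edgeDeg C v ≤ 2)
    (hCmin : ∀ e ∈ C,
      ({K ∈ ℬ | Saturates (C \ {e}) K}).ncard < ({K ∈ ℬ | Saturates C K}).ncard)
    (𝒢 : SimpleGraph ↥𝒦)
    (h𝒢 : 𝒢 = SimpleGraph.fromRel (fun K K' : ↥𝒦 =>
      ∃ e ∈ C, ∃ u v : V, e = s(u, v) ∧ u ∈ (K : Set V) ∧ v ∈ (K' : Set V))) :
    ∀ c : 𝒢.ConnectedComponent,
      (∃ K₀ ∈ c.supp, ∀ K ∈ c.supp, K ≠ K₀ → 𝒢.neighborSet K = {K₀}) ∧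
      (∀ K₁ K₂ : ↥𝒦, K₁ ≠ K₂ → c.supp = {K₁, K₂} →
        ((K₁ : Set V) ∈ ℬ ∨ (K₂ : Set V) ∈ ℬ)) ∧
      (3 ≤ c.supp.ncard → ∃ K₀ ∈ c.supp,
        (∀ K ∈ c.supp, K ≠ K₀ → 𝒢.neighborSet K = {K₀}) ∧
        (∀ K ∈ c.supp, K ≠ K₀ → (K : Set V) ∈ ℬ)) :=
  stmt5_general 𝒦 ℬ hBK hdisj C hCmin 𝒢 h𝒢
end

section
/- Consider a 5-path-center configuration in a finite simple graph G with A1 ∪ A2 = {1,2,3,4,5}. Then G contains a collection of vertex-disjoint paths, each of order at least 4, covering at least 13 vertices in total; and if moreover A2 ∩ {1,3,5} ≠ ∅, then G contains such a collection covering at least 17 vertices in total. -/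
open SimpleGraph

/-- A 5-path-center configuration in `G`: a path `v 0 – v 1 – v 2 – v 3 – v 4` in `G`
(indices `0,…,4` correspond to `v1,…,v5`), disjoint index sets `A1` (1-anchors) and
`A2` (2-anchors), pairwise disjoint sets `U i` avoiding the `v i`'s, for each
`i ∈ A1 ∪ A2` a path `Q i` of order at least 3 with endpoint `v i` and all other
vertices in `U i`, and for each `i ∈ A2` additionally a path `P i` of order at least 5
with `v i ∈ V(P i) ⊆ {v i} ∪ U i`. -/
structure FivePathConfig {V : Type*} (G : SimpleGraph V) where
  v : Fin 5 → V
  inj : Function.Injective v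
  adj : ∀ i : Fin 4, G.Adj (v i.castSucc) (v i.succ)
  A1 : Finset (Fin 5)
  A2 : Finset (Fin 5)
  hA : Disjoint A1 A2
  U : Fin 5 → Set V
  hUv : ∀ i ∈ A1 ∪ A2, Disjoint (U i) (Set.range v)
  hUdisj : ∀ i ∈ A1 ∪ A2, ∀ j ∈ A1 ∪ A2, i ≠ j → Disjoint (U i) (U j)
  Q : Fin 5 → G.Subgraph
  hQpath : ∀ i ∈ A1 ∪ A2, IsPathSubgraph (Q i)
  hQcard : ∀ i ∈ A1 ∪ A2, 3 ≤ (Q i).verts.ncard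
  hQend : ∀ i ∈ A1 ∪ A2, IsPathEndpoint (Q i) (v i)
  hQverts : ∀ i ∈ A1 ∪ A2, (Q i).verts ⊆ insert (v i) (U i)
  P : Fin 5 → G.Subgraph
  hPpath : ∀ i ∈ A2, IsPathSubgraph (P i)
  hPcard : ∀ i ∈ A2, 5 ≤ (P i).verts.ncard
  hPv : ∀ i ∈ A2, v i ∈ (P i).verts
  hPverts : ∀ i ∈ A2, (P i).verts ⊆ insert (v i) (U i)


/-!
Every `Q i` is a path ending at `v i`, and all the paths of the configuration live in the
pairwise disjoint sets `{v i} ∪ U i`. Joining `Q i` and `Q (i+1)` along the edge `v i v (i+1)`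
gives a path on at least `3 + 3 = 6` vertices, and joining `Q 0` and `Q 2` through `v 1` one on
at least `3 + 1 + 3 = 7`; together with `Q 3 – v 3 v 4 – Q 4` this covers `13` vertices. If a
2-anchor `i` is `0`, `2` or `4`, the other four indices split into two consecutive pairs, so
`P i` and two joined pairs cover `5 + 6 + 6 = 17` vertices.
-/

section PathGluing

variable {V : Type*} {G : SimpleGraph V}

def IsPathEndingAt (P : G.Subgraph) (x : V) : Prop :=
  IsPathSubgraph P ∧ IsPathEndpoint P x

lemma SimpleGraph.Subgraph.neighborSet_eq_empty_of_notMem {H : G.Subgraph} {v : V} (hv : v ∉ H.verts) :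
    H.neighborSet v = ∅ :=
  Set.eq_empty_of_forall_notMem fun _ h => hv h.fst_mem

lemma subDeg_sup_of_notMem_right {H K : G.Subgraph} {v : V} (hv : v ∉ K.verts) :
    subDeg (H ⊔ K) v = subDeg H v := by
  rw [subDeg, Subgraph.neighborSet_sup, Subgraph.neighborSet_eq_empty_of_notMem hv,
    Set.union_empty, subDeg]

lemma subDeg_sup_of_notMem_left {H K : G.Subgraph} {v : V} (hv : v ∉ H.verts) :
    subDeg (H ⊔ K) v = subDeg K v := by
  rw [sup_comm, subDeg_sup_of_notMem_right hv]

lemma subDeg_sup_of_disjoint [Finite V] {H K : G.Subgraph} {v : V}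
    (h : Disjoint (H.neighborSet v) (K.neighborSet v)) :
    subDeg (H ⊔ K) v = subDeg H v + subDeg K v := by
  rw [subDeg, Subgraph.neighborSet_sup, Set.ncard_union_eq h, subDeg, subDeg]

lemma IsPathEndpoint.sup_left {H K : G.Subgraph} {v : V} (hv : IsPathEndpoint H v)
    (hvK : v ∉ K.verts) : IsPathEndpoint (H ⊔ K) v :=
  ⟨Or.inl hv.1, by rw [subDeg_sup_of_notMem_right hvK]; exact hv.2⟩

/-- An endpoint has a neighbour, so the path is not a single vertex. -/
lemma IsPathEndingAt.degrees {P : G.Subgraph} {x : V} (hP : IsPathEndingAt P x) :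
    {v ∈ P.verts | subDeg P v = 1}.ncard = 2 ∧
      ∀ v ∈ P.verts, subDeg P v = 1 ∨ subDeg P v = 2 := by
  refine hP.1.2.resolve_left ?_
  rintro ⟨v, hv⟩
  obtain ⟨y, hy⟩ := Set.ncard_eq_one.mp hP.2.2
  have hxy : P.Adj x y := by rw [← Subgraph.mem_neighborSet, hy]; rfl
  have hx : x = v := by simpa [hv] using hxy.fst_mem
  have hy' : y = v := by simpa [hv] using hxy.snd_mem
  exact hxy.ne (hx.trans hy'.symm)

lemma subDeg_subgraphOfAdj {a b z : V} (h : G.Adj a b) (hz : z ∈ ({a, b} : Set V)) :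
    subDeg (G.subgraphOfAdj h) z = 1 := by
  rcases hz with rfl | rfl
  · simp [subDeg, neighborSet_fst_subgraphOfAdj]
  · simp [subDeg, neighborSet_snd_subgraphOfAdj]

lemma isPathSubgraph_subgraphOfAdj {a b : V} (h : G.Adj a b) :
    IsPathSubgraph (G.subgraphOfAdj h) := by
  have hends : {z ∈ (G.subgraphOfAdj h).verts | subDeg (G.subgraphOfAdj h) z = 1} = {a, b} := by
    rw [subgraphOfAdj_verts]
    exact Set.sep_eq_self_iff_mem_true.mpr fun z hz => subDeg_subgraphOfAdj h hz
  refine ⟨Subgraph.subgraphOfAdj_connected h, Or.inr ⟨?_, ?_⟩⟩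
  · rw [hends, Set.ncard_pair h.ne]
  · rw [subgraphOfAdj_verts]
    exact fun z hz => Or.inl (subDeg_subgraphOfAdj h hz)

lemma ncard_verts_sup_add_one [Finite V] {P Q : G.Subgraph} {x : V} (hxP : x ∈ P.verts)
    (hxQ : x ∈ Q.verts) (hPQ : P.verts ∩ Q.verts ⊆ {x}) :
    (P ⊔ Q).verts.ncard + 1 = P.verts.ncard + Q.verts.ncard := by
  have hinter : P.verts ∩ Q.verts = {x} :=
    hPQ.antisymm (Set.singleton_subset_iff.mpr ⟨hxP, hxQ⟩)
  rw [Subgraph.verts_sup, ← Set.ncard_union_add_ncard_inter, hinter, Set.ncard_singleton]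

theorem IsPathEndingAt.sup [Finite V] {P Q : G.Subgraph} {x : V} (hP : IsPathEndingAt P x)
    (hQ : IsPathEndingAt Q x) (hPQ : P.verts ∩ Q.verts ⊆ {x}) : IsPathSubgraph (P ⊔ Q) := by
  obtain ⟨hPends, hPdeg⟩ := hP.degrees
  obtain ⟨hQends, hQdeg⟩ := hQ.degrees
  have hPside : ∀ z ∈ P.verts, z ≠ x → z ∉ Q.verts := fun z hz hzx hzQ => hzx (hPQ ⟨hz, hzQ⟩)
  have hdegx : subDeg (P ⊔ Q) x = 2 := by
    rw [subDeg_sup_of_disjoint, hP.2.2, hQ.2.2]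
    refine Set.disjoint_left.mpr fun y hyP hyQ => ?_
    have hyx : y = x :=
      hPQ ⟨P.neighborSet_subset_verts x hyP, Q.neighborSet_subset_verts x hyQ⟩
    exact (Subgraph.mem_neighborSet _ _ _ |>.mp hyP).ne hyx.symm
  have hends : {z ∈ (P ⊔ Q).verts | subDeg (P ⊔ Q) z = 1} =
      ({z ∈ P.verts | subDeg P z = 1} \ {x}) ∪ ({z ∈ Q.verts | subDeg Q z = 1} \ {x}) := by
    ext z
    rcases eq_or_ne z x with rfl | hzx
    · simp [hdegx]
    by_cases hzP : z ∈ P.verts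
    · simp [hzP, hzx, hPside z hzP hzx, subDeg_sup_of_notMem_right (hPside z hzP hzx)]
    · simp [hzP, hzx, subDeg_sup_of_notMem_left hzP]
  refine ⟨Subgraph.connected_sup hP.1.1.preconnected hQ.1.1.preconnected
    ⟨x, hP.2.1, hQ.2.1⟩, Or.inr ⟨?_, ?_⟩⟩
  · have hdisj : Disjoint ({z ∈ P.verts | subDeg P z = 1} \ {x})
        ({z ∈ Q.verts | subDeg Q z = 1} \ {x}) :=
      Set.disjoint_left.mpr fun z hz hz' => hz.2 (hPQ ⟨hz.1.1, hz'.1.1⟩)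
    have hxP : x ∈ {z ∈ P.verts | subDeg P z = 1} := hP.2
    have hxQ : x ∈ {z ∈ Q.verts | subDeg Q z = 1} := hQ.2
    rw [hends, Set.ncard_union_eq hdisj, Set.ncard_sdiff_singleton_of_mem hxP,
      Set.ncard_sdiff_singleton_of_mem hxQ, hPends, hQends]
  · intro z hz
    rcases eq_or_ne z x with rfl | hzx
    · exact Or.inr hdegx
    by_cases hzP : z ∈ P.verts
    · rw [subDeg_sup_of_notMem_right (hPside z hzP hzx)]
      exact hPdeg z hzP
    · rw [subDeg_sup_of_notMem_left hzP]
      exact hQdeg z (hz.resolve_left hzP)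

lemma IsPathEndingAt.sup_subgraphOfAdj [Finite V] {P : G.Subgraph} {p w : V}
    (hP : IsPathEndingAt P p) (hw : w ∉ P.verts) (h : G.Adj p w) :
    IsPathEndingAt (P ⊔ G.subgraphOfAdj h) w ∧
      (P ⊔ G.subgraphOfAdj h).verts = insert w P.verts := by
  have hverts : (P ⊔ G.subgraphOfAdj h).verts = insert w P.verts := by
    rw [Subgraph.verts_sup, subgraphOfAdj_verts, Set.union_insert,
      Set.insert_eq_of_mem (Set.mem_union_left _ hP.2.1), Set.union_singleton]
  have hedge : IsPathEndingAt (G.subgraphOfAdj h) p :=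
    ⟨isPathSubgraph_subgraphOfAdj h, by simp, subDeg_subgraphOfAdj h (by simp)⟩
  have hpath : IsPathSubgraph (P ⊔ G.subgraphOfAdj h) := hP.sup hedge <| by
    rintro z ⟨hzP, rfl | rfl⟩
    exacts [Set.mem_singleton _, absurd hzP hw]
  have hend : IsPathEndpoint (P ⊔ G.subgraphOfAdj h) w :=
    ⟨by simp [hverts], by rw [subDeg_sup_of_notMem_left hw, subDeg_subgraphOfAdj h (by simp)]⟩
  exact ⟨⟨hpath, hend⟩, hverts⟩

lemma IsPathEndingAt.sup_subgraphOfAdj_sup [Finite V] {P Q : G.Subgraph} {p q : V}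
    (hP : IsPathEndingAt P p) (hQ : IsPathEndingAt Q q) (hPQ : Disjoint P.verts Q.verts)
    (h : G.Adj p q) :
    IsPathSubgraph (P ⊔ G.subgraphOfAdj h ⊔ Q) ∧
      (P ⊔ G.subgraphOfAdj h ⊔ Q).verts.ncard = P.verts.ncard + Q.verts.ncard := by
  have hqP : q ∉ P.verts := Set.disjoint_right.mp hPQ hQ.2.1
  obtain ⟨hP', hverts⟩ := hP.sup_subgraphOfAdj hqP h
  have hinter : (P ⊔ G.subgraphOfAdj h).verts ∩ Q.verts ⊆ {q} := by
    rw [hverts]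
    rintro z ⟨rfl | hzP, hzQ⟩
    exacts [Set.mem_singleton _, absurd hzQ (Set.disjoint_left.mp hPQ hzP)]
  have hcard := ncard_verts_sup_add_one hP'.2.1 hQ.2.1 hinter
  rw [hverts, Set.ncard_insert_of_notMem hqP] at hcard
  exact ⟨hP'.sup hQ hinter, by omega⟩

end PathGluing

section Covers

variable {V : Type*} [Finite V] {G : SimpleGraph V}

lemma hasDisjointPathCover_pair {R₁ R₂ : G.Subgraph} (h₁ : IsPathSubgraph R₁)
    (h₂ : IsPathSubgraph R₂) (hc₁ : 4 ≤ R₁.verts.ncard) (hc₂ : 4 ≤ R₂.verts.ncard)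
    (h₁₂ : Disjoint R₁.verts R₂.verts) {N : ℕ} (hN : N ≤ R₁.verts.ncard + R₂.verts.ncard) :
    HasDisjointPathCover G N := by
  refine ⟨{R₁, R₂}, ?_, ?_, ?_⟩
  · rintro P (rfl | rfl)
    exacts [⟨h₁, hc₁⟩, ⟨h₂, hc₂⟩]
  · exact Set.pairwise_pair.mpr fun _ => ⟨h₁₂, h₁₂.symm⟩
  · simpa [Set.ncard_union_eq h₁₂] using hN

lemma hasDisjointPathCover_triple {R₁ R₂ R₃ : G.Subgraph} (h₁ : IsPathSubgraph R₁)
    (h₂ : IsPathSubgraph R₂) (h₃ : IsPathSubgraph R₃) (hc₁ : 4 ≤ R₁.verts.ncard)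
    (hc₂ : 4 ≤ R₂.verts.ncard) (hc₃ : 4 ≤ R₃.verts.ncard) (h₁₂ : Disjoint R₁.verts R₂.verts)
    (h₁₃ : Disjoint R₁.verts R₃.verts) (h₂₃ : Disjoint R₂.verts R₃.verts) {N : ℕ}
    (hN : N ≤ R₁.verts.ncard + R₂.verts.ncard + R₃.verts.ncard) :
    HasDisjointPathCover G N := by
  refine ⟨{R₁, R₂, R₃}, ?_, ?_, ?_⟩
  · rintro P (rfl | rfl | rfl)
    exacts [⟨h₁, hc₁⟩, ⟨h₂, hc₂⟩, ⟨h₃, hc₃⟩]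
  · refine Set.pairwise_insert.mpr ⟨Set.pairwise_pair.mpr fun _ => ⟨h₂₃, h₂₃.symm⟩, ?_⟩
    rintro R (rfl | rfl) -
    exacts [⟨h₁₂, h₁₂.symm⟩, ⟨h₁₃, h₁₃.symm⟩]
  · have h₁₂₃ : Disjoint R₁.verts (R₂.verts ∪ R₃.verts) := Disjoint.union_right h₁₂ h₁₃
    simpa [Set.ncard_union_eq h₁₂₃, Set.ncard_union_eq h₂₃, add_assoc] using hN

end Covers

namespace FivePathConfig

variable {V : Type*} {G : SimpleGraph V} (cfg : FivePathConfig G)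

def block (i : Fin 5) : Set V := insert (cfg.v i) (cfg.U i)

def blocks (S : Finset (Fin 5)) : Set V := ⋃ i ∈ S, cfg.block i

lemma v_notMem_block {i j : Fin 5} (hi : i ∈ cfg.A1 ∪ cfg.A2) (hij : i ≠ j) :
    cfg.v j ∉ cfg.block i := by
  rintro (h | h)
  · exact hij (cfg.inj h).symm
  · exact Set.disjoint_left.mp (cfg.hUv i hi) h ⟨j, rfl⟩

lemma disjoint_block {i j : Fin 5} (hi : i ∈ cfg.A1 ∪ cfg.A2) (hj : j ∈ cfg.A1 ∪ cfg.A2)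
    (hij : i ≠ j) : Disjoint (cfg.block i) (cfg.block j) := by
  rw [block, Set.disjoint_insert_left, block, Set.disjoint_insert_right]
  exact ⟨cfg.v_notMem_block hj hij.symm, fun h => cfg.v_notMem_block hi hij (Or.inr h),
    cfg.hUdisj i hi j hj hij⟩

lemma disjoint_blocks {S T : Finset (Fin 5)} (hS : S ⊆ cfg.A1 ∪ cfg.A2)
    (hT : T ⊆ cfg.A1 ∪ cfg.A2) (hST : Disjoint S T) : Disjoint (cfg.blocks S) (cfg.blocks T) := by
  simp only [blocks, Set.disjoint_iUnion_left, Set.disjoint_iUnion_right]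
  exact fun j hj i hi =>
    cfg.disjoint_block (hS hi) (hT hj) fun hij => Finset.disjoint_left.mp hST hi (hij ▸ hj)

lemma block_subset_blocks {i : Fin 5} {S : Finset (Fin 5)} (hi : i ∈ S) :
    cfg.block i ⊆ cfg.blocks S :=
  Set.subset_biUnion_of_mem (u := cfg.block) (Finset.mem_coe.mpr hi)

lemma v_mem_blocks {i : Fin 5} {S : Finset (Fin 5)} (hi : i ∈ S) : cfg.v i ∈ cfg.blocks S :=
  cfg.block_subset_blocks hi (Set.mem_insert _ _)

lemma Q_verts_subset_blocks {i : Fin 5} {S : Finset (Fin 5)} (hi : i ∈ cfg.A1 ∪ cfg.A2)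
    (hiS : i ∈ S) : (cfg.Q i).verts ⊆ cfg.blocks S :=
  (cfg.hQverts i hi).trans (cfg.block_subset_blocks hiS)

lemma P_verts_subset_blocks {i : Fin 5} (hi : i ∈ cfg.A2) : (cfg.P i).verts ⊆ cfg.blocks {i} :=
  (cfg.hPverts i hi).trans (cfg.block_subset_blocks (Finset.mem_singleton_self i))

lemma isPathEndingAt_Q {i : Fin 5} (hi : i ∈ cfg.A1 ∪ cfg.A2) :
    IsPathEndingAt (cfg.Q i) (cfg.v i) :=
  ⟨cfg.hQpath i hi, cfg.hQend i hi⟩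

lemma v_notMem_Q {i j : Fin 5} (hi : i ∈ cfg.A1 ∪ cfg.A2) (hij : i ≠ j) :
    cfg.v j ∉ (cfg.Q i).verts :=
  fun h => cfg.v_notMem_block hi hij (cfg.hQverts i hi h)

lemma disjoint_Q {i j : Fin 5} (hi : i ∈ cfg.A1 ∪ cfg.A2) (hj : j ∈ cfg.A1 ∪ cfg.A2)
    (hij : i ≠ j) : Disjoint (cfg.Q i).verts (cfg.Q j).verts :=
  (cfg.disjoint_block hi hj hij).mono (cfg.hQverts i hi) (cfg.hQverts j hj)

def linkedPair (i : Fin 4) : G.Subgraph :=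
  cfg.Q i.castSucc ⊔ G.subgraphOfAdj (cfg.adj i) ⊔ cfg.Q i.succ

def linkedTriple : G.Subgraph :=
  cfg.Q 0 ⊔ G.subgraphOfAdj (cfg.adj 0) ⊔ G.subgraphOfAdj (cfg.adj 1) ⊔ cfg.Q 2

lemma linkedPair_verts_subset {i : Fin 4} (h₁ : i.castSucc ∈ cfg.A1 ∪ cfg.A2)
    (h₂ : i.succ ∈ cfg.A1 ∪ cfg.A2) :
    (cfg.linkedPair i).verts ⊆ cfg.blocks {i.castSucc, i.succ} := by
  simp only [linkedPair, Subgraph.verts_sup, subgraphOfAdj_verts, Set.union_subset_iff,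
    Set.insert_subset_iff, Set.singleton_subset_iff]
  exact ⟨⟨cfg.Q_verts_subset_blocks h₁ (by simp), cfg.v_mem_blocks (by simp),
    cfg.v_mem_blocks (by simp)⟩, cfg.Q_verts_subset_blocks h₂ (by simp)⟩

lemma linkedTriple_verts_subset (h₀ : 0 ∈ cfg.A1 ∪ cfg.A2) (h₂ : 2 ∈ cfg.A1 ∪ cfg.A2) :
    cfg.linkedTriple.verts ⊆ cfg.blocks {0, 1, 2} := by
  simp only [linkedTriple, Subgraph.verts_sup, subgraphOfAdj_verts, Set.union_subset_iff,
    Set.insert_subset_iff, Set.singleton_subset_iff]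
  exact ⟨⟨⟨cfg.Q_verts_subset_blocks h₀ (by simp), cfg.v_mem_blocks (by simp),
    cfg.v_mem_blocks (by simp)⟩, cfg.v_mem_blocks (by simp), cfg.v_mem_blocks (by simp)⟩,
    cfg.Q_verts_subset_blocks h₂ (by simp)⟩

variable [Finite V]

lemma isPathSubgraph_linkedPair_and_ncard {i : Fin 4} (h₁ : i.castSucc ∈ cfg.A1 ∪ cfg.A2)
    (h₂ : i.succ ∈ cfg.A1 ∪ cfg.A2) :
    IsPathSubgraph (cfg.linkedPair i) ∧ 6 ≤ (cfg.linkedPair i).verts.ncard := by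
  obtain ⟨hpath, hcard⟩ := (cfg.isPathEndingAt_Q h₁).sup_subgraphOfAdj_sup
    (cfg.isPathEndingAt_Q h₂) (cfg.disjoint_Q h₁ h₂ Fin.castSucc_lt_succ.ne) (cfg.adj i)
  refine ⟨hpath, ?_⟩
  have := cfg.hQcard _ h₁
  have := cfg.hQcard _ h₂
  rw [linkedPair, hcard]
  omega

lemma isPathSubgraph_linkedTriple_and_ncard (h₀ : 0 ∈ cfg.A1 ∪ cfg.A2)
    (h₂ : 2 ∈ cfg.A1 ∪ cfg.A2) :
    IsPathSubgraph cfg.linkedTriple ∧ 7 ≤ cfg.linkedTriple.verts.ncard := by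
  obtain ⟨hP, hverts⟩ :=
    (cfg.isPathEndingAt_Q h₀).sup_subgraphOfAdj (cfg.v_notMem_Q h₀ (by decide)) (cfg.adj 0)
  have hdisj : Disjoint (insert (cfg.v 1) (cfg.Q 0).verts) (cfg.Q 2).verts :=
    Set.disjoint_insert_left.mpr ⟨cfg.v_notMem_Q h₂ (by decide), cfg.disjoint_Q h₀ h₂ (by decide)⟩
  obtain ⟨hpath, hcard⟩ := hP.sup_subgraphOfAdj_sup (cfg.isPathEndingAt_Q h₂)
    (hverts ▸ hdisj) (cfg.adj 1)
  refine ⟨hpath, ?_⟩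
  have := cfg.hQcard 0 h₀
  have := cfg.hQcard 2 h₂
  rw [linkedTriple, hcard, hverts, Set.ncard_insert_of_notMem (cfg.v_notMem_Q h₀ (by decide))]
  omega

theorem hasDisjointPathCover_thirteen (hanc : ∀ i, i ∈ cfg.A1 ∪ cfg.A2) :
    HasDisjointPathCover G 13 := by
  obtain ⟨hA, hcA⟩ := cfg.isPathSubgraph_linkedTriple_and_ncard (hanc 0) (hanc 2)
  obtain ⟨hB, hcB⟩ := cfg.isPathSubgraph_linkedPair_and_ncard (i := 3) (hanc _) (hanc _)
  have hAB : Disjoint cfg.linkedTriple.verts (cfg.linkedPair 3).verts :=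
    (cfg.disjoint_blocks (fun l _ => hanc l) (fun l _ => hanc l) (by decide)).mono
      (cfg.linkedTriple_verts_subset (hanc 0) (hanc 2))
      (cfg.linkedPair_verts_subset (hanc _) (hanc _))
  exact hasDisjointPathCover_pair hA hB (by omega) (by omega) hAB (by omega)

theorem hasDisjointPathCover_seventeen (hanc : ∀ i, i ∈ cfg.A1 ∪ cfg.A2) {i : Fin 5}
    (hi : i ∈ cfg.A2) {j k : Fin 4} (hij : Disjoint {i} ({j.castSucc, j.succ} : Finset (Fin 5)))
    (hik : Disjoint {i} ({k.castSucc, k.succ} : Finset (Fin 5)))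
    (hjk : Disjoint ({j.castSucc, j.succ} : Finset (Fin 5)) {k.castSucc, k.succ}) :
    HasDisjointPathCover G 17 := by
  have hblocks {S T : Finset (Fin 5)} (hST : Disjoint S T) :
      Disjoint (cfg.blocks S) (cfg.blocks T) :=
    cfg.disjoint_blocks (fun l _ => hanc l) (fun l _ => hanc l) hST
  have hP := cfg.P_verts_subset_blocks hi
  have hJ := cfg.linkedPair_verts_subset (i := j) (hanc _) (hanc _)
  have hK := cfg.linkedPair_verts_subset (i := k) (hanc _) (hanc _)
  obtain ⟨hJpath, hJcard⟩ := cfg.isPathSubgraph_linkedPair_and_ncard (i := j) (hanc _) (hanc _)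
  obtain ⟨hKpath, hKcard⟩ := cfg.isPathSubgraph_linkedPair_and_ncard (i := k) (hanc _) (hanc _)
  have hPcard := cfg.hPcard i hi
  exact hasDisjointPathCover_triple (cfg.hPpath i hi) hJpath hKpath (by omega) (by omega)
    (by omega) ((hblocks hij).mono hP hJ) ((hblocks hik).mono hP hK) ((hblocks hjk).mono hJ hK)
    (by omega)

end FivePathConfig

theorem stmt7_general {V : Type*} [Fintype V] (G : SimpleGraph V)
    (cfg : FivePathConfig G) (hall : cfg.A1 ∪ cfg.A2 = Finset.univ) :
    HasDisjointPathCover G 13 ∧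
    ((cfg.A2 ∩ ({0, 2, 4} : Finset (Fin 5))).Nonempty → HasDisjointPathCover G 17) := by
  have hanc (i : Fin 5) : i ∈ cfg.A1 ∪ cfg.A2 := hall ▸ Finset.mem_univ i
  refine ⟨cfg.hasDisjointPathCover_thirteen hanc, ?_⟩
  rintro ⟨i, hi⟩
  obtain ⟨hi₂, hi⟩ := Finset.mem_inter.mp hi
  simp only [Finset.mem_insert, Finset.mem_singleton] at hi
  rcases hi with rfl | rfl | rfl
  · exact cfg.hasDisjointPathCover_seventeen hanc hi₂ (j := 1) (k := 3) (by decide) (by decide)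
      (by decide)
  · exact cfg.hasDisjointPathCover_seventeen hanc hi₂ (j := 0) (k := 3) (by decide) (by decide)
      (by decide)
  · exact cfg.hasDisjointPathCover_seventeen hanc hi₂ (j := 0) (k := 2) (by decide) (by decide)
      (by decide)

/-- a 5-path-center configuration with `A1 ∪ A2 = {1,…,5}` yields
vertex-disjoint `4⁺`-paths covering at least 13 vertices, and at least 17 if some
`2`-anchor is among `v1, v3, v5` (indices `0, 2, 4`). -/
theorem stmt7 {V : Type*} [Fintype V] [DecidableEq V] (G : SimpleGraph V)
    (cfg : FivePathConfig G) (hall : cfg.A1 ∪ cfg.A2 = Finset.univ) :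
    HasDisjointPathCover G 13 ∧
    ((cfg.A2 ∩ ({0, 2, 4} : Finset (Fin 5))).Nonempty → HasDisjointPathCover G 17) :=
  stmt7_general G cfg hall
end

section
/- In a finite simple graph G, consider either an edge-center configuration with A2 = {1,2}, or a 5-path-center configuration with |A2| ≥ 2. Then G contains a collection of vertex-disjoint paths, each of order at least 4, covering at least 10 vertices in total. -/
open SimpleGraph

/-- An edge-center configuration in `G`: an edge `{v 0, v 1}` of `G` (indices `0,1`
correspond to `v1,v2`), disjoint index sets `A1` (1-anchors) and `A2` (2-anchors),
pairwise disjoint sets `U i` avoiding the `v i`'s, for each `i ∈ A1 ∪ A2` a path `Q i`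
of order at least 3 with endpoint `v i` and all other vertices in `U i`, and for each
`i ∈ A2` additionally a path `P i` of order at least 5 with
`v i ∈ V(P i) ⊆ {v i} ∪ U i`. -/
structure EdgeCenterConfig {V : Type*} (G : SimpleGraph V) where
  v : Fin 2 → V
  inj : Function.Injective v
  adj : G.Adj (v 0) (v 1)
  A1 : Finset (Fin 2)
  A2 : Finset (Fin 2)
  hA : Disjoint A1 A2
  U : Fin 2 → Set V
  hUv : ∀ i ∈ A1 ∪ A2, Disjoint (U i) (Set.range v)
  hUdisj : ∀ i ∈ A1 ∪ A2, ∀ j ∈ A1 ∪ A2, i ≠ j → Disjoint (U i) (U j)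
  Q : Fin 2 → G.Subgraph
  hQpath : ∀ i ∈ A1 ∪ A2, IsPathSubgraph (Q i)
  hQcard : ∀ i ∈ A1 ∪ A2, 3 ≤ (Q i).verts.ncard
  hQend : ∀ i ∈ A1 ∪ A2, IsPathEndpoint (Q i) (v i)
  hQverts : ∀ i ∈ A1 ∪ A2, (Q i).verts ⊆ insert (v i) (U i)
  P : Fin 2 → G.Subgraph
  hPpath : ∀ i ∈ A2, IsPathSubgraph (P i)
  hPcard : ∀ i ∈ A2, 5 ≤ (P i).verts.ncard
  hPv : ∀ i ∈ A2, v i ∈ (P i).verts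
  hPverts : ∀ i ∈ A2, (P i).verts ⊆ insert (v i) (U i)

/-! Two 2-anchors `i ≠ j` carry paths `P i`, `P j` of order at least 5. They live in
`{v i} ∪ U i` and `{v j} ∪ U j`, which are disjoint because the centre vertices are distinct
and the sets `U` avoid the centre and each other; so these two paths already cover 10
vertices. -/

theorem Set.disjoint_insert_insert_of_injective {ι V : Type*} {v : ι → V}
    (hv : Function.Injective v) {U : ι → Set V} {i j : ι} (hij : i ≠ j)
    (hUi : Disjoint (U i) (Set.range v)) (hUj : Disjoint (U j) (Set.range v))
    (hU : Disjoint (U i) (U j)) :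
    Disjoint (insert (v i) (U i)) (insert (v j) (U j)) := by
  simp only [Set.disjoint_insert_left, Set.disjoint_insert_right, Set.mem_insert_iff, not_or]
  exact ⟨⟨hv.ne hij.symm, Set.disjoint_right.mp hUi ⟨j, rfl⟩⟩,
    Set.disjoint_right.mp hUj ⟨i, rfl⟩, hU⟩

theorem HasDisjointPathCover.mono {V : Type*} {G : SimpleGraph V} {M N : ℕ}
    (h : HasDisjointPathCover G N) (hMN : M ≤ N) : HasDisjointPathCover G M :=
  let ⟨Ps, hPs, hdisj, hN⟩ := h
  ⟨Ps, hPs, hdisj, hMN.trans hN⟩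

theorem hasDisjointPathCover_pair_s11 {V : Type*} {G : SimpleGraph V} {P P' : G.Subgraph}
    (hP : IsPathSubgraph P) (hP' : IsPathSubgraph P')
    (hcard : 4 ≤ P.verts.ncard) (hcard' : 4 ≤ P'.verts.ncard)
    (hd : Disjoint P.verts P'.verts) :
    HasDisjointPathCover G (P.verts.ncard + P'.verts.ncard) := by
  refine ⟨{P, P'}, ?_, ?_, ?_⟩
  · rintro Q (rfl | rfl)
    exacts [⟨hP, hcard⟩, ⟨hP', hcard'⟩]
  · exact Set.pairwise_pair.mpr fun _ => ⟨hd, hd.symm⟩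
  · rw [Set.biUnion_pair, Set.ncard_union_eq hd (Set.finite_of_ncard_pos (by omega))
      (Set.finite_of_ncard_pos (by omega))]

theorem FivePathConfig.hasDisjointPathCover_ten {V : Type*} {G : SimpleGraph V}
    (cfg : FivePathConfig G) {i j : Fin 5} (hi : i ∈ cfg.A2) (hj : j ∈ cfg.A2) (hij : i ≠ j) :
    HasDisjointPathCover G 10 := by
  have hi' : i ∈ cfg.A1 ∪ cfg.A2 := Finset.mem_union_right _ hi
  have hj' : j ∈ cfg.A1 ∪ cfg.A2 := Finset.mem_union_right _ hj
  have hd : Disjoint (cfg.P i).verts (cfg.P j).verts :=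
    (Set.disjoint_insert_insert_of_injective cfg.inj hij (cfg.hUv i hi') (cfg.hUv j hj')
      (cfg.hUdisj i hi' j hj' hij)).mono (cfg.hPverts i hi) (cfg.hPverts j hj)
  have hci := cfg.hPcard i hi
  have hcj := cfg.hPcard j hj
  exact (hasDisjointPathCover_pair_s11 (cfg.hPpath i hi) (cfg.hPpath j hj) (by omega) (by omega)
    hd).mono (by omega)

theorem EdgeCenterConfig.hasDisjointPathCover_ten {V : Type*} {G : SimpleGraph V}
    (cfg : EdgeCenterConfig G) (hA2 : cfg.A2 = Finset.univ) :
    HasDisjointPathCover G 10 := by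
  have h0 : (0 : Fin 2) ∈ cfg.A2 := hA2 ▸ Finset.mem_univ _
  have h1 : (1 : Fin 2) ∈ cfg.A2 := hA2 ▸ Finset.mem_univ _
  have h0' : (0 : Fin 2) ∈ cfg.A1 ∪ cfg.A2 := Finset.mem_union_right _ h0
  have h1' : (1 : Fin 2) ∈ cfg.A1 ∪ cfg.A2 := Finset.mem_union_right _ h1
  have hd : Disjoint (cfg.P 0).verts (cfg.P 1).verts :=
    (Set.disjoint_insert_insert_of_injective cfg.inj zero_ne_one (cfg.hUv 0 h0')
      (cfg.hUv 1 h1') (cfg.hUdisj 0 h0' 1 h1' zero_ne_one)).mono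
      (cfg.hPverts 0 h0) (cfg.hPverts 1 h1)
  have hc0 := cfg.hPcard 0 h0
  have hc1 := cfg.hPcard 1 h1
  exact (hasDisjointPathCover_pair_s11 (cfg.hPpath 0 h0) (cfg.hPpath 1 h1) (by omega) (by omega)
    hd).mono (by omega)

theorem stmt11_general {V : Type*} (G : SimpleGraph V)
    (hyp : (∃ cfg : EdgeCenterConfig G, cfg.A2 = Finset.univ) ∨
           (∃ cfg : FivePathConfig G, 2 ≤ cfg.A2.card)) :
    HasDisjointPathCover G 10 := by
  rcases hyp with ⟨cfg, hA2⟩ | ⟨cfg, hA2⟩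
  · exact cfg.hasDisjointPathCover_ten hA2
  · obtain ⟨i, hi, j, hj, hij⟩ := Finset.one_lt_card.mp hA2
    exact cfg.hasDisjointPathCover_ten hi hj hij

/-- an edge-center configuration with `A2 = {1, 2}` (i.e. `A2` is all of
`Fin 2`), or a 5-path-center configuration with `|A2| ≥ 2`, yields vertex-disjoint
`4⁺`-paths covering at least 10 vertices. -/
theorem stmt11 {V : Type*} [Fintype V] [DecidableEq V] (G : SimpleGraph V)
    (hyp : (∃ cfg : EdgeCenterConfig G, cfg.A2 = Finset.univ) ∨
           (∃ cfg : FivePathConfig G, 2 ≤ cfg.A2.card)) :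
    HasDisjointPathCover G 10 :=
  stmt11_general G hyp
end
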